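/- arXiv:1803.08824 — 9 statements merged into one kernel-verified Lean document; each statement's English description precedes it below -/
import Mathlib

section
/- Let 𝔮 = Σ_{A ∈ 𝒜} a_A 𝔰_A be a hypergraphic polytope in ℝ^n, with all a_A > 0, and let f: [n] → ℝ be a linear functional. Then the face 𝔮_f is a point if and only if for every A ∈ 𝒜, the set of minimizers of f on A is a singleton. -/
open Pointwise

/-- The simplex `𝔰_A = conv{e_j : j ∈ A}` in `ℝⁿ`. -/
def smplx {n : ℕ} (A : Finset (Fin n)) : Set (Fin n → ℝ) :=
  convexHull ℝ ((fun j => Pi.single j (1 : ℝ)) '' ↑A)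

namespace Stmt3Aux

lemma mem_smplx_iff {n : ℕ} {A : Finset (Fin n)} {x : Fin n → ℝ} :
    x ∈ smplx A ↔ (∀ i, 0 ≤ x i) ∧ (∀ i, i ∉ A → x i = 0) ∧ ∑ i, x i = 1 := by
  constructor
  · intro hx
    have hS : Convex ℝ {x : Fin n → ℝ |
        (∀ i, 0 ≤ x i) ∧ (∀ i, i ∉ A → x i = 0) ∧ ∑ i, x i = 1} := by
      rintro x ⟨hx0, hxs, hx1⟩ y ⟨hy0, hys, hy1⟩ s t hs ht hst
      refine ⟨fun i => add_nonneg (mul_nonneg hs (hx0 i)) (mul_nonneg ht (hy0 i)),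
        fun i hi => by simp [hxs i hi, hys i hi], ?_⟩
      simp only [Pi.add_apply, Pi.smul_apply, smul_eq_mul]
      rw [Finset.sum_add_distrib, ← Finset.mul_sum, ← Finset.mul_sum, hx1, hy1]
      linarith
    refine convexHull_min ?_ hS hx
    rintro _ ⟨j, hj, rfl⟩
    refine ⟨fun i => ?_, fun i hi => ?_, by simp⟩
    · simp only [Pi.single_apply]; split <;> norm_num
    · simp only [Pi.single_apply, ite_eq_right_iff]
      rintro rfl; exact absurd hj hi
  · rintro ⟨h0, hz, hs⟩
    have hA1 : ∑ j ∈ A, x j = 1 := by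
      rw [← hs]
      exact Finset.sum_subset A.subset_univ (fun i _ hi => hz i hi)
    have hmem := Finset.centerMass_mem_convexHull (t := A) (w := x)
      (z := fun j => (Pi.single j (1:ℝ) : Fin n → ℝ))
      (fun i _ => h0 i) (by rw [hA1]; norm_num)
      (fun i hi => Set.mem_image_of_mem _ (by exact_mod_cast hi))
    have hcm : A.centerMass x (fun j => (Pi.single j (1:ℝ) : Fin n → ℝ)) = x := by
      rw [Finset.centerMass, hA1, inv_one, one_smul]
      funext i
      rw [Finset.sum_apply]
      have : ∀ j ∈ A, (x j • (Pi.single j (1:ℝ) : Fin n → ℝ)) i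
          = if i = j then x j else 0 := by
        intro j _
        rw [Pi.smul_apply, Pi.single_apply, smul_eq_mul]
        split <;> simp
      rw [Finset.sum_congr rfl this, Finset.sum_ite_eq A i x]
      split
      · rfl
      · exact (hz i (by assumption)).symm
    rw [hcm] at hmem
    exact hmem

variable {n : ℕ} (f : Fin n → ℝ)

/-- The set of minimizers of `f` on `A`. -/
noncomputable def mins (A : Finset (Fin n)) : Finset (Fin n) :=
  A.filter (fun i => ∀ k ∈ A, f i ≤ f k)

lemma mem_mins {A : Finset (Fin n)} {i : Fin n} :
    i ∈ mins f A ↔ i ∈ A ∧ ∀ k ∈ A, f i ≤ f k := Finset.mem_filter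

lemma mins_nonempty {A : Finset (Fin n)} (hA : A.Nonempty) : (mins f A).Nonempty := by
  obtain ⟨i, hi, hmin⟩ := A.exists_min_image f hA
  exact ⟨i, (mem_mins f).2 ⟨hi, hmin⟩⟩

lemma mins_subset (A : Finset (Fin n)) : mins f A ⊆ A := Finset.filter_subset _ _

lemma smplx_mono {A B : Finset (Fin n)} (h : A ⊆ B) : smplx A ⊆ smplx B :=
  convexHull_mono (Set.image_mono (by exact_mod_cast h))

lemma f_eq_on_mins {A : Finset (Fin n)} {i j : Fin n}
    (hi : i ∈ mins f A) (hj : j ∈ mins f A) : f i = f j := by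
  rw [mem_mins] at hi hj
  exact le_antisymm (hi.2 j hj.1) (hj.2 i hi.1)

/-- Lower bound of the linear functional on `smplx A`. -/
lemma le_L {A : Finset (Fin n)} {i₀ : Fin n} (hi₀ : i₀ ∈ mins f A)
    {x : Fin n → ℝ} (hx : x ∈ smplx A) : f i₀ ≤ ∑ i, f i * x i := by
  obtain ⟨h0, hz, hs⟩ := mem_smplx_iff.1 hx
  calc f i₀ = ∑ i, f i₀ * x i := by rw [← Finset.mul_sum, hs, mul_one]
    _ ≤ ∑ i, f i * x i := by
      refine Finset.sum_le_sum fun i _ => ?_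
      by_cases hiA : i ∈ A
      · exact mul_le_mul_of_nonneg_right (((mem_mins f).1 hi₀).2 i hiA) (h0 i)
      · rw [hz i hiA, mul_zero, mul_zero]

/-- Exact value of the linear functional on `smplx (mins f A)`. -/
lemma L_eq {A : Finset (Fin n)} {i₀ : Fin n} (hi₀ : i₀ ∈ mins f A)
    {x : Fin n → ℝ} (hx : x ∈ smplx (mins f A)) : ∑ i, f i * x i = f i₀ := by
  obtain ⟨h0, hz, hs⟩ := mem_smplx_iff.1 hx
  have : ∀ i ∈ Finset.univ, f i * x i = f i₀ * x i := by
    intro i _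
    by_cases hi : i ∈ mins f A
    · rw [f_eq_on_mins f hi hi₀]
    · rw [hz i hi, mul_zero, mul_zero]
  rw [Finset.sum_congr rfl this, ← Finset.mul_sum, hs, mul_one]

/-- Equality case: if the functional attains its min, we are in the sub-simplex. -/
lemma mem_mins_smplx_of_L_eq {A : Finset (Fin n)} {i₀ : Fin n} (hi₀ : i₀ ∈ mins f A)
    {x : Fin n → ℝ} (hx : x ∈ smplx A) (h : ∑ i, f i * x i = f i₀) :
    x ∈ smplx (mins f A) := by
  obtain ⟨h0, hz, hs⟩ := mem_smplx_iff.1 hx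
  have key : ∀ i, i ∉ mins f A → x i = 0 := by
    have hsum0 : ∑ i, (f i - f i₀) * x i = 0 := by
      have : ∑ i, (f i - f i₀) * x i = (∑ i, f i * x i) - ∑ i, f i₀ * x i := by
        rw [← Finset.sum_sub_distrib]
        exact Finset.sum_congr rfl fun i _ => by ring
      rw [this, h, ← Finset.mul_sum, hs, mul_one, sub_self]
    have hnn : ∀ i ∈ Finset.univ, 0 ≤ (f i - f i₀) * x i := by
      intro i _
      by_cases hiA : i ∈ A
      · exact mul_nonneg (by linarith [((mem_mins f).1 hi₀).2 i hiA]) (h0 i)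
      · rw [hz i hiA, mul_zero]
    have hall := (Finset.sum_eq_zero_iff_of_nonneg hnn).1 hsum0
    intro i hi
    by_cases hiA : i ∈ A
    · have hlt : f i₀ < f i := by
        rw [mem_mins] at hi
        push_neg at hi
        obtain ⟨k, hk, hki⟩ := hi hiA
        exact lt_of_le_of_lt (((mem_mins f).1 hi₀).2 k hk) hki
      have := hall i (Finset.mem_univ i)
      rcases mul_eq_zero.1 this with h' | h'
      · linarith
      · exact h'
    · exact hz i hiA
  exact mem_smplx_iff.2 ⟨h0, key, hs⟩

lemma sum_singleton_sets {ι M : Type*} [AddCommMonoid M] (s : Finset ι) (c : ι → M) :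
    ∑ i ∈ s, ({c i} : Set M) = {∑ i ∈ s, c i} := by
  induction s using Finset.cons_induction with
  | empty => simp; rfl
  | cons B t hB ih =>
    rw [Finset.sum_cons, Finset.sum_cons, ih]
    exact Set.singleton_add_singleton

end Stmt3Aux

open Stmt3Aux

/-- For a hypergraphic polytope `𝔮 = ∑_{A ∈ 𝒜} a_A 𝔰_A` (all `a_A > 0`,
all `A` nonempty) and a linear functional given by `f : Fin n → ℝ`, the face of `𝔮`
minimizing `f` is a point iff for every `A ∈ 𝒜` the set of minimizers of `f` on `A` is a
singleton. -/
theorem stmt3 {n : ℕ} (𝒜 : Finset (Finset (Fin n)))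
    (h𝒜 : ∀ A ∈ 𝒜, A.Nonempty) (a : Finset (Fin n) → ℝ)
    (ha : ∀ A ∈ 𝒜, 0 < a A) (f : Fin n → ℝ) :
    (∃ x : Fin n → ℝ,
        {z ∈ ∑ A ∈ 𝒜, a A • smplx A |
          ∀ y ∈ ∑ A ∈ 𝒜, a A • smplx A, ∑ i, f i * z i ≤ ∑ i, f i * y i} = {x}) ↔
      ∀ A ∈ 𝒜, ∃ j : Fin n, {i : Fin n | i ∈ A ∧ ∀ k ∈ A, f i ≤ f k} = {j} := by
  classical
  -- trivial case 𝒜 = ∅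
  rcases eq_or_ne 𝒜 ∅ with rfl | hne
  · constructor
    · intro _ A hA; exact absurd hA (Finset.notMem_empty A)
    · intro _
      refine ⟨0, ?_⟩
      ext z
      simp only [Finset.sum_empty, Set.mem_setOf_eq, Set.mem_singleton_iff]
      constructor
      · rintro ⟨hz, -⟩
        simpa using hz
      · rintro rfl
        constructor
        · simp
        · intro y hy
          have : y = 0 := by simpa using hy
          rw [this]
  · -- nontrivial case
    have h𝒜ne : 𝒜.Nonempty := Finset.nonempty_iff_ne_empty.2 hne
    obtain ⟨A₀, hA₀⟩ := h𝒜ne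
    have : Nonempty (Fin n) := ⟨(h𝒜 A₀ hA₀).choose⟩
    -- choose a minimizer p A ∈ mins f A for each A
    have hpick : ∀ A : Finset (Fin n), ∃ i : Fin n, A ∈ 𝒜 → i ∈ mins f A := by
      intro A
      by_cases hA : A ∈ 𝒜
      · obtain ⟨i, hi⟩ := mins_nonempty f (h𝒜 A hA)
        exact ⟨i, fun _ => hi⟩
      · exact ⟨Classical.arbitrary _, fun h => absurd h hA⟩
    choose p hp using hpick
    set e : Fin n → (Fin n → ℝ) := fun j => Pi.single j (1:ℝ) with he
    set Q : Set (Fin n → ℝ) := ∑ A ∈ 𝒜, a A • smplx A with hQ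
    set S : Set (Fin n → ℝ) := ∑ A ∈ 𝒜, a A • smplx (mins f A) with hSdef
    set m : ℝ := ∑ A ∈ 𝒜, a A * f (p A) with hm
    have hSQ : S ⊆ Q := by
      refine Set.finset_sum_subset_finset_sum 𝒜 _ _ fun A hA => ?_
      exact Set.smul_set_mono (smplx_mono (mins_subset f A))
    -- value of functional on S
    have hLS : ∀ w ∈ S, ∑ i, f i * w i = m := by
      intro w hw
      obtain ⟨g, hg, hgsum⟩ := (Set.mem_finset_sum _ _ _).1 hw
      have hsplit : ∑ i, f i * w i = ∑ A ∈ 𝒜, ∑ i, f i * g A i := by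
        rw [← hgsum]
        rw [Finset.sum_comm]
        refine Finset.sum_congr rfl fun i _ => ?_
        rw [Finset.sum_apply, Finset.mul_sum]
      rw [hsplit, hm]
      refine Finset.sum_congr rfl fun A hA => ?_
      obtain ⟨x, hx, hxe⟩ := hg hA
      rw [← hxe]
      have : ∑ i, f i * (a A • x) i = a A * ∑ i, f i * x i := by
        rw [Finset.mul_sum]
        refine Finset.sum_congr rfl fun i _ => ?_
        simp [mul_comm, mul_left_comm]
      rw [this, L_eq f (hp A hA) hx]
    -- lower bound on Q, with equality giving membership in S
    have hLQ : ∀ z ∈ Q, m ≤ ∑ i, f i * z i ∧ (∑ i, f i * z i = m → z ∈ S) := by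
      intro z hz
      obtain ⟨g, hg, hgsum⟩ := (Set.mem_finset_sum _ _ _).1 hz
      have hsplit : ∑ i, f i * z i = ∑ A ∈ 𝒜, ∑ i, f i * g A i := by
        rw [← hgsum, Finset.sum_comm]
        refine Finset.sum_congr rfl fun i _ => ?_
        rw [Finset.sum_apply, Finset.mul_sum]
      -- decompose each g A
      have hterm : ∀ A ∈ 𝒜, a A * f (p A) ≤ ∑ i, f i * g A i := by
        intro A hA
        obtain ⟨x, hx, hxe⟩ := hg hA
        have hxL : ∑ i, f i * (a A • x) i = a A * ∑ i, f i * x i := by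
          rw [Finset.mul_sum]
          refine Finset.sum_congr rfl fun i _ => ?_
          simp [mul_comm, mul_left_comm]
        rw [← hxe, hxL]
        exact mul_le_mul_of_nonneg_left (le_L f (hp A hA) hx) (ha A hA).le
      constructor
      · rw [hsplit, hm]
        exact Finset.sum_le_sum hterm
      · intro heq
        have heq' : ∑ A ∈ 𝒜, a A * f (p A) = ∑ A ∈ 𝒜, ∑ i, f i * g A i := by
          rw [← hsplit, heq, hm]
        have hall := (Finset.sum_eq_sum_iff_of_le hterm).1 heq'
        rw [hSdef, ← hgsum]
        refine Set.finset_sum_mem_finset_sum 𝒜 _ _ fun A hA => ?_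
        obtain ⟨x, hx, hxe⟩ := hg hA
        have hxL : ∑ i, f i * (a A • x) i = a A * ∑ i, f i * x i := by
          rw [Finset.mul_sum]
          refine Finset.sum_congr rfl fun i _ => ?_
          simp [mul_comm, mul_left_comm]
        have hLx : ∑ i, f i * x i = f (p A) := by
          have := hall A hA
          rw [← hxe, hxL] at this
          exact (mul_left_cancel₀ (ha A hA).ne' this.symm)
        rw [← hxe]
        exact Set.smul_mem_smul_set (mem_mins_smplx_of_L_eq f (hp A hA) hx hLx)
    -- vertex membership
    have hvert : ∀ A ∈ 𝒜, a A • e (p A) ∈ a A • smplx (mins f A) := by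
      intro A hA
      refine Set.smul_mem_smul_set ?_
      exact subset_convexHull ℝ _ (Set.mem_image_of_mem _ (by exact_mod_cast hp A hA))
    have hSne : S.Nonempty :=
      ⟨_, Set.finset_sum_mem_finset_sum 𝒜 _ _ hvert⟩
    -- the face equals S
    have hface : {z ∈ Q | ∀ y ∈ Q, ∑ i, f i * z i ≤ ∑ i, f i * y i} = S := by
      ext z
      simp only [Set.mem_setOf_eq]
      constructor
      · rintro ⟨hzQ, hzmin⟩
        obtain ⟨w, hw⟩ := hSne
        have h1 : ∑ i, f i * z i ≤ m := by
          have := hzmin w (hSQ hw)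
          rwa [hLS w hw] at this
        have h2 := (hLQ z hzQ).1
        exact (hLQ z hzQ).2 (le_antisymm h1 h2)
      · intro hzS
        refine ⟨hSQ hzS, fun y hy => ?_⟩
        rw [hLS z hzS]
        exact (hLQ y hy).1
    rw [hface]
    -- now reduce to the combinatorial statement
    constructor
    · rintro ⟨x, hx⟩ A hA
      refine ⟨p A, ?_⟩
      ext i
      simp only [Set.mem_setOf_eq, Set.mem_singleton_iff]
      constructor
      · rintro ⟨hiA, himin⟩
        -- i ∈ mins f A; build two points of S
        have hi : i ∈ mins f A := (mem_mins f).2 ⟨hiA, himin⟩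
        by_contra hip
        -- two distinct points of S
        have hmem : ∀ c ∈ mins f A,
            a A • e c + ∑ B ∈ 𝒜.erase A, a B • e (p B) ∈ S := by
          intro c hc
          rw [hSdef, ← Finset.add_sum_erase 𝒜 _ hA]
          refine Set.add_mem_add ?_ ?_
          · exact Set.smul_mem_smul_set
              (subset_convexHull ℝ _ (Set.mem_image_of_mem _ (by exact_mod_cast hc)))
          · refine Set.finset_sum_mem_finset_sum _ _ _ fun B hB => ?_
            exact hvert B (Finset.mem_of_mem_erase hB)
        have h1 := hmem i hi
        have h2 := hmem (p A) (hp A hA)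
        rw [hx] at h1 h2
        have heq : a A • e i = a A • e (p A) := by
          have := h1.trans h2.symm
          exact add_right_cancel this
        have hei : e i = e (p A) := smul_right_injective _ (ha A hA).ne' heq
        apply hip
        have := congrFun hei i
        rw [he] at this
        simp only [Pi.single_apply, if_pos rfl] at this
        by_contra hne'
        rw [if_neg hne'] at this
        norm_num at this
      · rintro rfl
        exact (mem_mins f).1 (hp A hA)
    · intro hsing
      -- each mins is a singleton, so S is a singleton
      have hmins : ∀ A ∈ 𝒜, mins f A = {p A} := by
        intro A hA
        obtain ⟨j, hj⟩ := hsing A hA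
        have hcoe : (↑(mins f A) : Set (Fin n)) = {j} := by
          rw [← hj]
          ext i
          simp [mem_mins]
        have : mins f A = {j} := Finset.coe_injective (by rw [hcoe]; simp)
        rw [this]
        have : p A ∈ ({j} : Finset (Fin n)) := this ▸ hp A hA
        rw [Finset.mem_singleton] at this
        rw [this]
      have hsm : ∀ A ∈ 𝒜, a A • smplx (mins f A) = {a A • e (p A)} := by
        intro A hA
        rw [hmins A hA]
        have : smplx ({p A} : Finset (Fin n)) = {e (p A)} := by
          rw [smplx]
          simp only [Finset.coe_singleton, Set.image_singleton]
          exact convexHull_singleton _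
        rw [this, Set.smul_set_singleton]
      refine ⟨∑ A ∈ 𝒜, a A • e (p A), ?_⟩
      rw [hSdef, Finset.sum_congr rfl hsm]
      exact sum_singleton_sets 𝒜 _
end

section
/- Let G be a graph, and let e_1, e_2, e_3 be edges forming a triangle with e_3 ∈ E(G) and e_1, e_2 ∉ E(G). Then the chromatic symmetric functions satisfy Ψ(G) − Ψ(G ∪ {e_1}) − Ψ(G ∪ {e_2}) + Ψ(G ∪ {e_1, e_2}) = 0. -/
/-- The chromatic symmetric function of a finite graph `G`, as a formal power series in
countably many commuting variables `x_0, x_1, …` with rational coefficients: the coefficient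
of the monomial `∏ c, x_c ^ (d c)` is the number of proper colorings `f : V → ℕ` using each
color `c` exactly `d c` times. -/
noncomputable def chromPS {V : Type*} [Fintype V] (G : SimpleGraph V) :
    MvPowerSeries ℕ ℚ :=
  fun d => (Nat.card {f : V → ℕ // (∀ v w, G.Adj v w → f v ≠ f w) ∧
    ∀ c : ℕ, Nat.card {v : V // f v = c} = d c} : ℚ)

open SimpleGraph

/-- Abstract counting lemma via inclusion-exclusion on `¬ B`. -/
lemma key_count {α : Type*} (A B C : α → Prop) (hfin : {x | A x}.Finite)
    (h : ∀ x, A x → ¬ B x → C x) :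
    Nat.card {x // A x} + Nat.card {x // A x ∧ B x ∧ C x}
      = Nat.card {x // A x ∧ B x} + Nat.card {x // A x ∧ C x} := by
  classical
  have hAB : {x | A x ∧ B x}.Finite := hfin.subset fun x hx => hx.1
  have hAnB : {x | A x ∧ ¬ B x}.Finite := hfin.subset fun x hx => hx.1
  have hABC : {x | A x ∧ B x ∧ C x}.Finite := hfin.subset fun x hx => hx.1
  have e1 : {x | A x} = {x | A x ∧ B x} ∪ {x | A x ∧ ¬ B x} := by
    ext x; by_cases hb : B x <;> simp [hb]
  have e2 : {x | A x ∧ C x} = {x | A x ∧ B x ∧ C x} ∪ {x | A x ∧ ¬ B x} := by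
    ext x
    constructor
    · rintro ⟨ha, hc⟩
      by_cases hb : B x
      · exact Or.inl ⟨ha, hb, hc⟩
      · exact Or.inr ⟨ha, hb⟩
    · rintro (⟨ha, hb, hc⟩ | ⟨ha, hb⟩)
      · exact ⟨ha, hc⟩
      · exact ⟨ha, h x ha hb⟩
  have d1 : Disjoint {x | A x ∧ B x} {x | A x ∧ ¬ B x} := by
    rw [Set.disjoint_left]; rintro x ⟨_, hb⟩ ⟨_, hnb⟩; exact hnb hb
  have d2 : Disjoint {x | A x ∧ B x ∧ C x} {x | A x ∧ ¬ B x} := by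
    rw [Set.disjoint_left]; rintro x ⟨_, hb, _⟩ ⟨_, hnb⟩; exact hnb hb
  have c1 := Set.ncard_union_eq d1 hAB hAnB
  have c2 := Set.ncard_union_eq d2 hABC hAnB
  show {x | A x}.ncard + {x | A x ∧ B x ∧ C x}.ncard
    = {x | A x ∧ B x}.ncard + {x | A x ∧ C x}.ncard
  rw [e1, e2, c1, c2]
  omega

/-- The set of colorings with fixed color counts is finite. -/
lemma cnt_finite {V : Type*} [Fintype V] (d : ℕ →₀ ℕ) :
    {f : V → ℕ | ∀ c : ℕ, Nat.card {v : V // f v = c} = d c}.Finite := by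
  apply Set.Finite.subset (Set.Finite.pi (fun _ : V => d.support.finite_toSet))
  intro f hf
  rw [Set.mem_pi]
  intro v _
  simp only [Finset.mem_coe, Finsupp.mem_support_iff]
  rw [← hf (f v)]
  exact Nat.card_ne_zero.mpr ⟨⟨⟨v, rfl⟩⟩, inferInstance⟩

lemma adj_sup_one {V : Type*} (G : SimpleGraph V) (a b : V) (hab : a ≠ b) (f : V → ℕ) :
    (∀ v w, (G ⊔ SimpleGraph.fromEdgeSet {s(a, b)}).Adj v w → f v ≠ f w) ↔
    (∀ v w, G.Adj v w → f v ≠ f w) ∧ f a ≠ f b := by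
  simp only [SimpleGraph.sup_adj, SimpleGraph.fromEdgeSet_adj, Set.mem_singleton_iff,
    Sym2.eq_iff]
  constructor
  · intro h
    exact ⟨fun v w hvw => h v w (Or.inl hvw), h a b (Or.inr ⟨Or.inl ⟨rfl, rfl⟩, hab⟩)⟩
  · rintro ⟨h1, h2⟩ v w (hvw | ⟨(⟨rfl, rfl⟩ | ⟨rfl, rfl⟩), hne⟩)
    · exact h1 v w hvw
    · exact h2
    · exact h2.symm

/-- **modular relation.** If `e₁ = {v₂,v₃}` and `e₂ = {v₃,v₁}` are non-edges of
`G` which together with the edge `e₃ = {v₁,v₂}` of `G` form a triangle, then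
`Ψ(G) − Ψ(G ∪ {e₁}) − Ψ(G ∪ {e₂}) + Ψ(G ∪ {e₁,e₂}) = 0`. -/
theorem stmt5 {V : Type*} [Fintype V] (G : SimpleGraph V) (v₁ v₂ v₃ : V)
    (h₁₂ : G.Adj v₁ v₂) (h₂₃ : ¬ G.Adj v₂ v₃) (h₃₁ : ¬ G.Adj v₃ v₁)
    (hne₁ : v₂ ≠ v₃) (hne₂ : v₃ ≠ v₁) :
    chromPS G - chromPS (G ⊔ SimpleGraph.fromEdgeSet {s(v₂, v₃)})
        - chromPS (G ⊔ SimpleGraph.fromEdgeSet {s(v₃, v₁)})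
        + chromPS (G ⊔ SimpleGraph.fromEdgeSet {s(v₂, v₃), s(v₃, v₁)}) = 0 := by
  classical
  funext d
  show chromPS G d - chromPS _ d - chromPS _ d + chromPS _ d = 0
  set A : (V → ℕ) → Prop := fun f => (∀ v w, G.Adj v w → f v ≠ f w) ∧
    ∀ c : ℕ, Nat.card {v : V // f v = c} = d c with hA
  set B : (V → ℕ) → Prop := fun f => f v₂ ≠ f v₃ with hB
  set C : (V → ℕ) → Prop := fun f => f v₃ ≠ f v₁ with hC
  have hfin : {f : V → ℕ | A f}.Finite := (cnt_finite d).subset fun f hf => hf.2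
  have himp : ∀ f, A f → ¬ B f → C f := by
    intro f hAf hBf
    have h1 : f v₁ ≠ f v₂ := hAf.1 v₁ v₂ h₁₂
    simp only [hB, not_not] at hBf
    simp only [hC, ← hBf]
    exact fun h => h1 h.symm
  have key := key_count A B C hfin himp
  -- now identify each chromPS coefficient with the relevant Nat.card
  have c0 : chromPS G d = (Nat.card {f : V → ℕ // A f} : ℚ) := rfl
  have c1 : chromPS (G ⊔ SimpleGraph.fromEdgeSet {s(v₂, v₃)}) d
      = (Nat.card {f : V → ℕ // A f ∧ B f} : ℚ) := by
    unfold chromPS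
    congr 1
    exact_mod_cast Nat.card_congr (Equiv.subtypeEquivRight (fun f => by
      rw [adj_sup_one G v₂ v₃ hne₁ f]; tauto))
  have c2 : chromPS (G ⊔ SimpleGraph.fromEdgeSet {s(v₃, v₁)}) d
      = (Nat.card {f : V → ℕ // A f ∧ C f} : ℚ) := by
    unfold chromPS
    congr 1
    exact_mod_cast Nat.card_congr (Equiv.subtypeEquivRight (fun f => by
      rw [adj_sup_one G v₃ v₁ hne₂ f]; tauto))
  have c3 : chromPS (G ⊔ SimpleGraph.fromEdgeSet {s(v₂, v₃), s(v₃, v₁)}) d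
      = (Nat.card {f : V → ℕ // A f ∧ B f ∧ C f} : ℚ) := by
    unfold chromPS
    congr 1
    have hsplit : (SimpleGraph.fromEdgeSet {s(v₂, v₃), s(v₃, v₁)} : SimpleGraph V)
        = SimpleGraph.fromEdgeSet {s(v₂, v₃)} ⊔ SimpleGraph.fromEdgeSet {s(v₃, v₁)} := by
      rw [← SimpleGraph.fromEdgeSet_union]; congr 1
    rw [hsplit, ← sup_assoc]
    exact_mod_cast Nat.card_congr (Equiv.subtypeEquivRight (fun f => by
      rw [adj_sup_one _ v₃ v₁ hne₂ f, adj_sup_one G v₂ v₃ hne₁ f]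
      simp only [hA, hB, hC]; tauto))
  rw [c0, c1, c2, c3]
  have : (Nat.card {f : V → ℕ // A f} : ℚ) + Nat.card {f : V → ℕ // A f ∧ B f ∧ C f}
      = Nat.card {f : V → ℕ // A f ∧ B f} + Nat.card {f : V → ℕ // A f ∧ C f} := by
    exact_mod_cast key
  linarith
end

section
/- For a set partition π of [n], let K_π^c denote the complement of the disjoint union of complete graphs on the blocks of π. Then Υ_G(K_π^c) = Σ_{τ ≤ π} m_τ, summed over set partitions τ refined by π in the coarsening order (i.e., every block of τ is contained in a block of π). -/
open scoped Classical

instance setoidFinite {α : Type*} [Finite α] : Finite (Setoid α) :=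
  Finite.of_injective (fun s : Setoid α => s.r) fun a b h => by
    cases a; cases b; cases h; rfl

noncomputable instance setoidFintype {α : Type*} [Finite α] : Fintype (Setoid α) :=
  Fintype.ofFinite _

/-- The graph `K_π^c`: the complement of the disjoint union of complete graphs on the blocks
of the set partition `π` of `[n]` (encoded as a setoid). -/
def Kc {n : ℕ} (π : Setoid (Fin n)) : SimpleGraph (Fin n) where
  Adj i j := i ≠ j ∧ ¬ π.r i j
  symm := by
    constructor
    rintro i j ⟨h₁, h₂⟩
    exact ⟨h₁.symm, fun hr => h₂ (π.iseqv.symm hr)⟩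
  loopless := by constructor; rintro i ⟨h, -⟩; exact h rfl

theorem Setoid.eq_ker_iff {α β : Type*} (τ : Setoid α) (f : α → β) :
    τ = Setoid.ker f ↔ ∀ x y, f x = f y ↔ τ.r x y := by
  constructor
  · rintro rfl x y
    exact Setoid.ker_def.symm
  · intro h
    ext x y
    exact (h x y).symm.trans Setoid.ker_def.symm

theorem Kc_proper_iff_ker_le {n : ℕ} {β : Type*} (π : Setoid (Fin n)) (w : Fin n → β) :
    (∀ i j, (Kc π).Adj i j → w i ≠ w j) ↔ ∀ i j, (Setoid.ker w).r i j → π.r i j := by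
  simp only [Setoid.ker_def]
  constructor
  · intro hproper i j hw
    by_contra hπ
    have hij : i ≠ j := by rintro rfl; exact hπ (π.refl i)
    exact hproper i j ⟨hij, hπ⟩ hw
  · rintro hle i j ⟨-, hπ⟩ hw
    exact hπ (hle i j hw)

/-- `Υ(K_π^c) = ∑_{τ ≤ π} m_τ`, the sum over set partitions `τ` refining
`π`. The identity is stated coefficientwise on words `w : Fin n → ℕ`: the coefficient of `w`
in `Υ(K_π^c)` is `1` iff `w` is a proper coloring of `K_π^c`, and its coefficient in `m_τ`
is `1` iff the level sets of `w` are exactly the blocks of `τ`. -/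
theorem stmt6 {n : ℕ} (π : Setoid (Fin n)) (w : Fin n → ℕ) :
    (if ∀ i j, (Kc π).Adj i j → w i ≠ w j then (1 : ℚ) else 0) =
      ∑ τ ∈ Finset.univ.filter
          (fun τ : Setoid (Fin n) => ∀ i j, τ.r i j → π.r i j),
        (if ∀ i j, w i = w j ↔ τ.r i j then (1 : ℚ) else 0) := by
  -- Only `τ = ker w` contributes to the sum, and `w` is proper on `K_π^c` iff `ker w` refines `π`.
  simp only [← Setoid.eq_ker_iff, Finset.sum_ite_eq', Finset.mem_filter, Finset.mem_univ,
    true_and, Kc_proper_iff_ker_le]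
end

section
/- For set compositions π⃗, τ⃗ of [n], if π⃗ ⪯ τ⃗ in the singleton commuting preorder (i.e., for every nonempty A ⊆ [n], if the set of minima of A in π⃗ is a singleton then so is the set of minima of A in τ⃗), then the underlying set partition of π⃗ coarsens that of τ⃗, i.e., λ(π⃗) ≥ λ(τ⃗). -/
/-- A function `g : Fin n → Fin n` is *packed* if its set of used colors is a lower set;
packed functions encode exactly the set compositions of `[n]` (the blocks, in order, are the
level sets of `g`). -/
def IsPacked {n : ℕ} (g : Fin n → Fin n) : Prop :=
  ∀ c : Fin n, (∃ i, g i = c) → ∀ d : Fin n, d ≤ c → ∃ i, g i = d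

/-- Set compositions of `[n]`, encoded as packed functions. -/
abbrev SetComp (n : ℕ) := {g : Fin n → Fin n // IsPacked g}

/-- The set of minima `A_π⃗` of `A` in the set composition encoded by `g` is a singleton:
there is a unique element of `A` lying in the earliest block of `g` meeting `A`. -/
def UniqMin {n : ℕ} (g : Fin n → Fin n) (A : Finset (Fin n)) : Prop :=
  ∃! j, j ∈ A ∧ ∀ k ∈ A, g j ≤ g k

/-- The singleton commuting (SC) preorder on set compositions:
`π ⪯ τ` iff for every nonempty `A ⊆ [n]`, `#A_π⃗ = 1` implies `#A_τ⃗ = 1`. -/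
def SCle {n : ℕ} (π τ : SetComp n) : Prop :=
  ∀ A : Finset (Fin n), A.Nonempty → UniqMin π.1 A → UniqMin τ.1 A

lemma stmt10_aux {n : ℕ} (π τ : SetComp n) (h : SCle π τ) (i j : Fin n)
    (hτ : τ.1 i = τ.1 j) (hlt : π.1 i < π.1 j) : False := by
  have hij : i ≠ j := fun e => absurd (congrArg π.1 e) (ne_of_lt hlt)
  have hA : ({i, j} : Finset (Fin n)).Nonempty := ⟨i, by simp⟩
  have hUπ : UniqMin π.1 {i, j} := by
    refine ⟨i, ⟨by simp, ?_⟩, ?_⟩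
    · intro k hk
      rcases Finset.mem_insert.1 hk with rfl | hk
      · exact le_refl _
      · simp only [Finset.mem_singleton] at hk; subst hk; exact le_of_lt hlt
    · rintro y ⟨hy, hmin⟩
      rcases Finset.mem_insert.1 hy with rfl | hy
      · rfl
      · simp only [Finset.mem_singleton] at hy; subst hy
        exact absurd (hmin i (by simp)) (not_le_of_gt hlt)
  obtain ⟨y, _, huniq⟩ := h {i, j} hA hUπ
  have hi : y = i := (huniq i ⟨by simp, by
    intro k hk
    rcases Finset.mem_insert.1 hk with rfl | hk
    · exact le_refl _
    · simp only [Finset.mem_singleton] at hk; subst hk; exact le_of_eq hτ⟩).symm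
  have hj : y = j := (huniq j ⟨by simp, by
    intro k hk
    rcases Finset.mem_insert.1 hk with rfl | hk
    · exact le_of_eq hτ.symm
    · simp only [Finset.mem_singleton] at hk; subst hk; exact le_refl _⟩).symm
  exact hij (hi ▸ hj)

/-- If `π⃗ ⪯ τ⃗` in the SC preorder, then the underlying set partition of
`π⃗` coarsens that of `τ⃗`: whenever `i, j` lie in the same block of `τ⃗`, they lie in the
same block of `π⃗`. -/
theorem stmt10 {n : ℕ} (π τ : SetComp n) (h : SCle π τ) :
    ∀ i j : Fin n, τ.1 i = τ.1 j → π.1 i = π.1 j := by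
  intro i j hτ
  by_contra hne
  rcases lt_or_gt_of_ne hne with hlt | hlt
  · exact stmt10_aux π τ h i j hτ hlt
  · exact stmt10_aux π τ h j i hτ.symm hlt
end

section
/- Two set compositions π⃗, τ⃗ of [n] satisfy π⃗ ∼ τ⃗ (meaning: for every nonempty A ⊆ [n], the minima of A in π⃗ form a singleton iff the minima of A in τ⃗ do) if and only if (1) their underlying set partitions coincide, and (2) for every pair a, b ∈ [n] with a ≤_π⃗ b and b ≤_τ⃗ a, either both {a} and {b} are singleton blocks, or a and b lie in the same block. -/
/-- The SC equivalence relation: `π⃗ ∼ τ⃗` iff for every nonempty `A ⊆ [n]`,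
`#A_π⃗ = 1 ↔ #A_τ⃗ = 1`. -/
def SimSC {n : ℕ} (π τ : SetComp n) : Prop :=
  ∀ A : Finset (Fin n), A.Nonempty → (UniqMin π.1 A ↔ UniqMin τ.1 A)

lemma uniq_of {n : ℕ} (g : Fin n → Fin n) (A : Finset (Fin n)) (j : Fin n)
    (hj : j ∈ A) (hmin : ∀ k ∈ A, g j ≤ g k)
    (hstrict : ∀ k ∈ A, k ≠ j → g j < g k) : UniqMin g A := by
  refine ⟨j, ⟨hj, hmin⟩, ?_⟩
  rintro x ⟨hx, hxmin⟩
  by_contra hne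
  exact absurd (hxmin j hj) (not_le.mpr (hstrict x hx hne))

lemma not_uniq_of {n : ℕ} (g : Fin n → Fin n) (A : Finset (Fin n)) (i j : Fin n)
    (hi : i ∈ A) (hj : j ∈ A) (hij : i ≠ j) (heq : g i = g j)
    (hmin : ∀ k ∈ A, g i ≤ g k) : ¬ UniqMin g A := by
  rintro ⟨x, _, huniq⟩
  have h1 := huniq i ⟨hi, hmin⟩
  have h2 := huniq j ⟨hj, fun k hk => le_of_eq_of_le heq.symm (hmin k hk)⟩
  exact hij (h1.trans h2.symm)

/-- One direction of the hard implication. -/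
lemma uniq_trans {n : ℕ} (π τ : SetComp n)
    (h1 : ∀ i j : Fin n, π.1 i = π.1 j ↔ τ.1 i = τ.1 j)
    (h2 : ∀ a b : Fin n, π.1 a ≤ π.1 b → τ.1 b ≤ τ.1 a →
          ((∀ c, π.1 c = π.1 a → c = a) ∧ (∀ c, π.1 c = π.1 b → c = b)) ∨ π.1 a = π.1 b)
    (A : Finset (Fin n)) (hA : A.Nonempty) :
    UniqMin π.1 A → UniqMin τ.1 A := by
  rintro ⟨a, ⟨haA, hamin⟩, hauniq⟩
  obtain ⟨b, hbA, hbmin⟩ := A.exists_min_image τ.1 hA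
  refine ⟨b, ⟨hbA, hbmin⟩, ?_⟩
  rintro c ⟨hcA, hcmin⟩
  have hbc : τ.1 c = τ.1 b := le_antisymm (hcmin b hbA) (hbmin c hcA)
  have hπbc : π.1 c = π.1 b := (h1 c b).mpr hbc
  rcases h2 a b (hamin b hbA) (hbmin a haA) with ⟨_, hsb⟩ | hab
  · exact hsb c hπbc
  · have hb : b = a :=
      hauniq b ⟨hbA, fun k hk => le_of_eq_of_le hab.symm (hamin k hk)⟩
    have hc : c = a :=
      hauniq c ⟨hcA, fun k hk => le_of_eq_of_le (hπbc.trans hab.symm) (hamin k hk)⟩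
    exact hc.trans hb.symm

/-- `π⃗ ∼ τ⃗` iff (1) the underlying set partitions coincide, and
(2) for every pair `a, b` with `a ≤_π⃗ b` and `b ≤_τ⃗ a`, either both `{a}` and `{b}` are
singleton blocks, or `a` and `b` lie in the same block. -/
theorem stmt11 {n : ℕ} (π τ : SetComp n) :
    SimSC π τ ↔
      ((∀ i j : Fin n, π.1 i = π.1 j ↔ τ.1 i = τ.1 j) ∧
        ∀ a b : Fin n, π.1 a ≤ π.1 b → τ.1 b ≤ τ.1 a →
          ((∀ c, π.1 c = π.1 a → c = a) ∧ (∀ c, π.1 c = π.1 b → c = b)) ∨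
            π.1 a = π.1 b) := by
  constructor
  · intro hsim
    have key : ∀ (σ ρ : SetComp n), SimSC σ ρ →
        ∀ i j : Fin n, i ≠ j → σ.1 i = σ.1 j → ρ.1 i = ρ.1 j := by
      intro σ ρ hs i j hij h
      by_contra hne
      have hnu : ¬ UniqMin σ.1 {i, j} := by
        refine not_uniq_of σ.1 {i, j} i j (by simp) (by simp) hij h ?_
        intro k hk
        simp only [Finset.mem_insert, Finset.mem_singleton] at hk
        rcases hk with rfl | rfl
        · exact le_refl _
        · exact h.le
      have hu : UniqMin ρ.1 {i, j} := by
        rcases lt_or_gt_of_ne hne with hlt | hlt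
        · refine uniq_of ρ.1 {i, j} i (by simp) ?_ ?_
          · intro k hk
            simp only [Finset.mem_insert, Finset.mem_singleton] at hk
            rcases hk with rfl | rfl
            · exact le_refl _
            · exact hlt.le
          · intro k hk hki
            simp only [Finset.mem_insert, Finset.mem_singleton] at hk
            rcases hk with rfl | rfl
            · exact absurd rfl hki
            · exact hlt
        · refine uniq_of ρ.1 {i, j} j (by simp) ?_ ?_
          · intro k hk
            simp only [Finset.mem_insert, Finset.mem_singleton] at hk
            rcases hk with rfl | rfl
            · exact hlt.le
            · exact le_refl _
          · intro k hk hkj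
            simp only [Finset.mem_insert, Finset.mem_singleton] at hk
            rcases hk with rfl | rfl
            · exact hlt
            · exact absurd rfl hkj
      exact hnu ((hs {i, j} ⟨i, by simp⟩).mpr hu)
    have hsim' : SimSC τ π := fun A hA => (hsim A hA).symm
    have h1 : ∀ i j : Fin n, π.1 i = π.1 j ↔ τ.1 i = τ.1 j := by
      intro i j
      by_cases hij : i = j
      · subst hij; simp
      · exact ⟨key π τ hsim i j hij, key τ π hsim' i j hij⟩
    refine ⟨h1, ?_⟩
    intro a b hab hba
    by_cases heq : π.1 a = π.1 b
    · exact Or.inr heq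
    left
    have hπ : π.1 a < π.1 b := lt_of_le_of_ne hab heq
    have hτne : τ.1 a ≠ τ.1 b := fun h => heq ((h1 a b).mpr h)
    have hτ : τ.1 b < τ.1 a := lt_of_le_of_ne hba fun h => hτne h.symm
    have hanb : a ≠ b := fun h => heq (h ▸ rfl)
    constructor
    · -- block of a is a singleton
      intro c hc
      by_contra hca
      have hτc : τ.1 c = τ.1 a := (h1 c a).mp hc
      have hcb : c ≠ b := fun h => heq (hc.symm.trans (h ▸ rfl)) |>.elim
      set A : Finset (Fin n) := {a, b, c} with hAdef
      have hmem : ∀ k ∈ A, k = a ∨ k = b ∨ k = c := by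
        intro k hk
        simpa [hAdef, Finset.mem_insert, Finset.mem_singleton] using hk
      have hnu : ¬ UniqMin π.1 A := by
        refine not_uniq_of π.1 A a c (by simp [hAdef]) (by simp [hAdef])
          (fun h => hca h.symm) hc.symm ?_
        intro k hk
        rcases hmem k hk with rfl | rfl | rfl
        · exact le_refl _
        · exact hπ.le
        · exact hc.ge
      have hu : UniqMin τ.1 A := by
        refine uniq_of τ.1 A b (by simp [hAdef]) ?_ ?_
        · intro k hk
          rcases hmem k hk with rfl | rfl | rfl
          · exact hτ.le
          · exact le_refl _
          · exact hτc ▸ hτ.le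
        · intro k hk hkb
          rcases hmem k hk with rfl | rfl | rfl
          · exact hτ
          · exact absurd rfl hkb
          · exact hτc ▸ hτ
      exact hnu ((hsim A ⟨a, by simp [hAdef]⟩).mpr hu)
    · -- block of b is a singleton
      intro c hc
      by_contra hcb
      have hτc : τ.1 c = τ.1 b := (h1 c b).mp hc
      have hca : c ≠ a := fun h => heq (h ▸ hc)
      set A : Finset (Fin n) := {a, b, c} with hAdef
      have hmem : ∀ k ∈ A, k = a ∨ k = b ∨ k = c := by
        intro k hk
        simpa [hAdef, Finset.mem_insert, Finset.mem_singleton] using hk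
      have hu : UniqMin π.1 A := by
        refine uniq_of π.1 A a (by simp [hAdef]) ?_ ?_
        · intro k hk
          rcases hmem k hk with rfl | rfl | rfl
          · exact le_refl _
          · exact hπ.le
          · exact hc ▸ hπ.le
        · intro k hk hka
          rcases hmem k hk with rfl | rfl | rfl
          · exact absurd rfl hka
          · exact hπ
          · exact hc ▸ hπ
      have hnu : ¬ UniqMin τ.1 A := by
        refine not_uniq_of τ.1 A b c (by simp [hAdef]) (by simp [hAdef])
          (fun h => hcb h.symm) hτc.symm ?_
        intro k hk
        rcases hmem k hk with rfl | rfl | rfl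
        · exact hτ.le
        · exact le_refl _
        · exact hτc.ge
      exact hnu ((hsim A ⟨a, by simp [hAdef]⟩).mp hu)
  · rintro ⟨h1, h2⟩
    have h1' : ∀ i j : Fin n, τ.1 i = τ.1 j ↔ π.1 i = π.1 j := fun i j => (h1 i j).symm
    have h2' : ∀ a b : Fin n, τ.1 a ≤ τ.1 b → π.1 b ≤ π.1 a →
        ((∀ c, τ.1 c = τ.1 a → c = a) ∧ (∀ c, τ.1 c = τ.1 b → c = b)) ∨ τ.1 a = τ.1 b := by
      intro a b hab hba
      rcases h2 b a hba hab with ⟨hsb, hsa⟩ | hba'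
      · exact Or.inl ⟨fun c hc => hsa c ((h1' c a).mp hc), fun c hc => hsb c ((h1' c b).mp hc)⟩
      · exact Or.inr ((h1 b a).mp hba').symm
    intro A hA
    exact ⟨uniq_trans π τ h1 h2 A hA, uniq_trans τ π h1' h2' A hA⟩
end

section
/- If set compositions π⃗ and τ⃗ of [n] are equivalent under ∼ (for every nonempty A ⊆ [n], #A_π⃗ = 1 iff #A_τ⃗ = 1), then they have the same composition type: the sequences of block sizes α(π⃗) and α(τ⃗) are equal. -/
open Finset
-- key1
private lemma key1 {n : ℕ} (g : Fin n → Fin n) {i j : Fin n} (hij : i ≠ j) :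
    UniqMin g {i, j} ↔ g i ≠ g j := by
  constructor
  · rintro ⟨w, _, hw⟩ hgij
    have hi : i ∈ ({i, j} : Finset (Fin n)) ∧ ∀ k ∈ ({i, j} : Finset (Fin n)), g i ≤ g k := by
      refine ⟨by simp, ?_⟩
      intro k hk
      rcases mem_insert.mp hk with rfl | hk
      · exact le_refl _
      · simp only [mem_singleton] at hk; subst hk; exact le_of_eq hgij
    have hj : j ∈ ({i, j} : Finset (Fin n)) ∧ ∀ k ∈ ({i, j} : Finset (Fin n)), g j ≤ g k := by
      refine ⟨by simp, ?_⟩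
      intro k hk
      rcases mem_insert.mp hk with rfl | hk
      · exact le_of_eq hgij.symm
      · simp only [mem_singleton] at hk; subst hk; exact le_refl _
    exact hij ((hw i hi).trans (hw j hj).symm)
  · intro hne
    rcases lt_or_gt_of_ne hne with hlt | hlt
    · refine ⟨i, ⟨by simp, ?_⟩, ?_⟩
      · intro k hk
        rcases mem_insert.mp hk with rfl | hk
        · exact le_refl _
        · simp only [mem_singleton] at hk; subst hk; exact hlt.le
      · rintro y ⟨hy, hy2⟩
        rcases mem_insert.mp hy with rfl | hy
        · rfl
        · simp only [mem_singleton] at hy; subst hy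
          exact absurd (hy2 i (by simp)) (not_le.mpr hlt)
    · refine ⟨j, ⟨by simp, ?_⟩, ?_⟩
      · intro k hk
        rcases mem_insert.mp hk with rfl | hk
        · exact hlt.le
        · simp only [mem_singleton] at hk; subst hk; exact le_refl _
      · rintro y ⟨hy, hy2⟩
        rcases mem_insert.mp hy with rfl | hy
        · exact absurd (hy2 j (by simp)) (not_le.mpr hlt)
        · simp only [mem_singleton] at hy; exact hy

-- key2
private lemma key2 {n : ℕ} (g : Fin n → Fin n) {i j k : Fin n} (hik : i ≠ k)
    (hgik : g i = g k) (hgji : g j ≠ g i) :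
    UniqMin g {i, j, k} ↔ g j < g i := by
  have hmem : ∀ l ∈ ({i, j, k} : Finset (Fin n)), l = i ∨ l = j ∨ l = k := by
    intro l hl; simpa using hl
  constructor
  · rintro ⟨w, _, hw⟩
    by_contra hnot
    have hlt : g i < g j := lt_of_le_of_ne (not_lt.mp hnot) hgji.symm
    have hi : i ∈ ({i, j, k} : Finset (Fin n)) ∧ ∀ l ∈ ({i, j, k} : Finset (Fin n)), g i ≤ g l := by
      refine ⟨by simp, ?_⟩
      intro l hl
      rcases hmem l hl with rfl | rfl | rfl
      · exact le_refl _
      · exact hlt.le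
      · exact hgik.le
    have hk : k ∈ ({i, j, k} : Finset (Fin n)) ∧ ∀ l ∈ ({i, j, k} : Finset (Fin n)), g k ≤ g l := by
      refine ⟨by simp, ?_⟩
      intro l hl
      rcases hmem l hl with rfl | rfl | rfl
      · exact hgik.ge
      · exact hgik ▸ hlt.le
      · exact le_refl _
    exact hik ((hw i hi).trans (hw k hk).symm)
  · intro hlt
    refine ⟨j, ⟨by simp, ?_⟩, ?_⟩
    · intro l hl
      rcases hmem l hl with rfl | rfl | rfl
      · exact hlt.le
      · exact le_refl _
      · exact hgik ▸ hlt.le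
    · rintro y ⟨hy, hy2⟩
      rcases hmem y hy with rfl | rfl | rfl
      · exact absurd (hy2 j (by simp)) (not_le.mpr hlt)
      · rfl
      · exact absurd (hy2 j (by simp)) (not_le.mpr (hgik ▸ hlt))

-- L1: representatives
private lemma card_image_eq_card_reps {n : ℕ} (u : Fin n → Fin n) (S : Finset (Fin n)) :
    (S.image u).card = (S.filter (fun j => ∀ k ∈ S, u k = u j → j ≤ k)).card := by
  have himg : S.image u = (S.filter (fun j => ∀ k ∈ S, u k = u j → j ≤ k)).image u := by
    apply le_antisymm
    · intro c hc
      rcases mem_image.mp hc with ⟨j, hjS, rfl⟩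
      have hCne : (S.filter (fun k => u k = u j)).Nonempty := ⟨j, mem_filter.mpr ⟨hjS, rfl⟩⟩
      have hm := mem_filter.mp ((S.filter (fun k => u k = u j)).min'_mem hCne)
      refine mem_image.mpr ⟨_, mem_filter.mpr ⟨hm.1, ?_⟩, hm.2⟩
      intro k hkS hk
      exact (S.filter (fun k => u k = u j)).min'_le k (mem_filter.mpr ⟨hkS, hk.trans hm.2⟩)
    · exact image_subset_image (filter_subset _ _)
  rw [himg]
  apply card_image_of_injOn
  intro a ha b hb hab
  rw [mem_coe, mem_filter] at ha hb
  exact le_antisymm (ha.2 b hb.1 hab.symm) (hb.2 a ha.1 hab)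

-- L2
private lemma image_lt_eq_Iio {n : ℕ} {g : Fin n → Fin n} (hg : IsPacked g) {c : Fin n}
    (hc : ∃ i, g i = c) :
    ((univ.filter fun j => g j < c).image g) = Finset.Iio c := by
  apply le_antisymm
  · intro d hd
    rcases mem_image.mp hd with ⟨j, hj, rfl⟩
    exact mem_Iio.mpr (mem_filter.mp hj).2
  · intro d hd
    rw [mem_Iio] at hd
    rcases hg c hc d hd.le with ⟨j, rfl⟩
    exact mem_image.mpr ⟨j, mem_filter.mpr ⟨mem_univ _, hd⟩, rfl⟩

-- L3
private lemma used_iff_lt_card {n : ℕ} {g : Fin n → Fin n} (hg : IsPacked g) (c : Fin n) :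
    (∃ i, g i = c) ↔ c.val < (Finset.univ.image g).card := by
  constructor
  · intro hc
    have hsub : Finset.Iic c ⊆ Finset.univ.image g := by
      intro d hd
      rcases hg c hc d (mem_Iic.mp hd) with ⟨j, rfl⟩
      exact mem_image.mpr ⟨j, mem_univ _, rfl⟩
    have := card_le_card hsub
    rwa [Fin.card_Iic] at this
  · intro hlt
    by_contra hnc
    push_neg at hnc
    have hsub : Finset.univ.image g ⊆ Finset.Iio c := by
      intro d hd
      rcases mem_image.mp hd with ⟨j, _, rfl⟩
      rw [mem_Iio]
      by_contra hge
      rcases hg (g j) ⟨j, rfl⟩ c (not_lt.mp hge) with ⟨i, hi⟩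
      exact hnc i hi
    have := card_le_card hsub
    rw [Fin.card_Iio] at this
    omega

-- Claim A: the partitions coincide
private lemma simA {n : ℕ} {g f : Fin n → Fin n}
    (hsim : ∀ A : Finset (Fin n), A.Nonempty → (UniqMin g A ↔ UniqMin f A)) :
    ∀ i j : Fin n, g i = g j ↔ f i = f j := by
  intro i j
  by_cases hij : i = j
  · subst hij; simp
  · have := (hsim {i, j} ⟨i, by simp⟩)
    rw [key1 g hij, key1 f hij] at this
    exact not_iff_not.mp this

-- Claim D: elements of non-singleton blocks keep their color
private lemma big_fix {n : ℕ} {g f : Fin n → Fin n} (hg : IsPacked g) (hf : IsPacked f)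
    (hsim : ∀ A : Finset (Fin n), A.Nonempty → (UniqMin g A ↔ UniqMin f A))
    {i k : Fin n} (hik : i ≠ k) (hgik : g i = g k) : f i = g i := by
  have hA := simA hsim
  have horder : ∀ j, g j < g i ↔ f j < f i := by
    intro j
    by_cases hji : g j = g i
    · have hfji : f j = f i := (hA j i).mp hji
      rw [hji, hfji]
      simp
    · have h3 := hsim {i, j, k} ⟨i, by simp⟩
      rw [key2 g hik hgik hji, key2 f hik ((hA i k).mp hgik)
        (fun e => hji ((hA j i).mpr e))] at h3
      exact h3
  have hSeq : (univ.filter fun j => g j < g i) = (univ.filter fun j => f j < f i) := by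
    apply filter_congr
    intro j _
    exact horder j
  have hgcard : ((univ.filter fun j => g j < g i).image g).card = (g i).val := by
    rw [image_lt_eq_Iio hg ⟨i, rfl⟩, Fin.card_Iio]
  have hfcard : ((univ.filter fun j => f j < f i).image f).card = (f i).val := by
    rw [image_lt_eq_Iio hf ⟨i, rfl⟩, Fin.card_Iio]
  have hreps : ((univ.filter fun j => g j < g i).image g).card
      = ((univ.filter fun j => f j < f i).image f).card := by
    rw [card_image_eq_card_reps, card_image_eq_card_reps, ← hSeq]
    congr 1
    apply filter_congr
    intro j _
    have : (∀ k ∈ (univ.filter fun j => g j < g i), g k = g j → j ≤ k)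
        ↔ (∀ k ∈ (univ.filter fun j => g j < g i), f k = f j → j ≤ k) := by
      constructor
      · intro hp k hk hfk; exact hp k hk ((hA k j).mpr hfk)
      · intro hp k hk hgk; exact hp k hk ((hA k j).mp hgk)
    exact this
  apply Fin.ext
  rw [hfcard.symm.trans (hreps.symm.trans hgcard)]

-- number of used colors agree
private lemma card_image_univ_eq {n : ℕ} {g f : Fin n → Fin n}
    (hsim : ∀ A : Finset (Fin n), A.Nonempty → (UniqMin g A ↔ UniqMin f A)) :
    (Finset.univ.image g).card = (Finset.univ.image f).card := by
  have hA := simA hsim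
  rw [card_image_eq_card_reps, card_image_eq_card_reps]
  congr 1
  apply filter_congr
  intro j _
  have : (∀ k ∈ (univ : Finset (Fin n)), g k = g j → j ≤ k)
      ↔ (∀ k ∈ (univ : Finset (Fin n)), f k = f j → j ≤ k) := by
    constructor
    · intro hp k hk hfk; exact hp k hk ((hA k j).mpr hfk)
    · intro hp k hk hgk; exact hp k hk ((hA k j).mp hgk)
  exact this

private theorem stmt12' {n : ℕ} {g f : Fin n → Fin n} (hg : IsPacked g) (hf : IsPacked f)
    (hsim : ∀ A : Finset (Fin n), A.Nonempty → (UniqMin g A ↔ UniqMin f A)) :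
    ∀ c : Fin n,
      (Finset.univ.filter fun i => g i = c).card =
        (Finset.univ.filter fun i => f i = c).card := by
  intro c
  have hA := simA hsim
  have hsim' : ∀ A : Finset (Fin n), A.Nonempty → (UniqMin f A ↔ UniqMin g A) :=
    fun A hAne => (hsim A hAne).symm
  by_cases hbig : ∃ i k : Fin n, i ≠ k ∧ g i = c ∧ g k = c
  · obtain ⟨i, k, hik, hgi, hgk⟩ := hbig
    have hfi : f i = g i := big_fix hg hf hsim hik (hgi.trans hgk.symm)
    congr 1
    apply filter_congr
    intro j _
    have : g j = c ↔ f j = c := by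
      constructor
      · intro hj
        rw [(hA j i).mp (hj.trans hgi.symm), hfi]; exact hgi
      · intro hj
        rw [(hA j i).mpr (hj.trans (hfi.trans hgi).symm)]; exact hgi
    exact this
  · have hbig' : ¬ ∃ i k : Fin n, i ≠ k ∧ f i = c ∧ f k = c := by
      rintro ⟨i, k, hik, hfi, hfk⟩
      have hgi : g i = f i := big_fix hf hg hsim' hik (hfi.trans hfk.symm)
      have hgk : g k = g i := (hA k i).mpr (hfk.trans hfi.symm)
      exact hbig ⟨i, k, hik, hgi.trans hfi, hgk.trans (hgi.trans hfi)⟩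
    have hle1g : (Finset.univ.filter fun i => g i = c).card ≤ 1 := by
      apply card_le_one.mpr
      intro a ha b hb
      rw [mem_filter] at ha hb
      by_contra hab
      exact hbig ⟨a, b, hab, ha.2, hb.2⟩
    have hle1f : (Finset.univ.filter fun i => f i = c).card ≤ 1 := by
      apply card_le_one.mpr
      intro a ha b hb
      rw [mem_filter] at ha hb
      by_contra hab
      exact hbig' ⟨a, b, hab, ha.2, hb.2⟩
    have hused : (∃ i, g i = c) ↔ (∃ i, f i = c) := by
      rw [used_iff_lt_card hg, used_iff_lt_card hf, card_image_univ_eq hsim]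
    by_cases hc : ∃ i, g i = c
    · obtain ⟨i, hi⟩ := hc
      obtain ⟨j, hj⟩ := hused.mp ⟨i, hi⟩
      have h1 : 0 < (Finset.univ.filter fun i => g i = c).card :=
        card_pos.mpr ⟨i, mem_filter.mpr ⟨mem_univ _, hi⟩⟩
      have h2 : 0 < (Finset.univ.filter fun i => f i = c).card :=
        card_pos.mpr ⟨j, mem_filter.mpr ⟨mem_univ _, hj⟩⟩
      omega
    · have hc' : ¬ ∃ i, f i = c := fun e => hc (hused.mpr e)
      push_neg at hc hc'
      rw [filter_eq_empty_iff.mpr (fun {x} _ => hc x),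
        filter_eq_empty_iff.mpr (fun {x} _ => hc' x)]

/-- Equivalent set compositions have the same composition type: the
`c`-th block (level set) of `π⃗` has the same size as the `c`-th block of `τ⃗`, for each
color `c`. -/
theorem stmt12 {n : ℕ} (π τ : SetComp n) (h : SimSC π τ) :
    ∀ c : Fin n,
      (Finset.univ.filter fun i => π.1 i = c).card =
        (Finset.univ.filter fun i => τ.1 i = c).card :=
  stmt12' π.2 τ.2 h
end

section
/- The relation ≤' on integer compositions of n, defined by α ≤' β iff there exist set compositions π⃗ ⪯ τ⃗ (SC preorder) with α(π⃗) = α and α(τ⃗) = β, is a partial order. -/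
/-- The set composition `π⃗` has composition type (ordered list of block sizes) `c`. -/
def Represents {n : ℕ} (π : SetComp n) (c : Composition n) : Prop :=
  c.length = (Finset.univ.filter fun b : Fin n => ∃ i, π.1 i = b).card ∧
    ∀ j : Fin c.length,
      c.blocksFun j = (Finset.univ.filter fun i : Fin n => (π.1 i : ℕ) = (j : ℕ)).card

/-- The relation `≤'` on integer compositions of `n` induced by the SC preorder. -/
def le' {n : ℕ} (c₁ c₂ : Composition n) : Prop :=
  ∃ π τ : SetComp n, SCle π τ ∧ Represents π c₁ ∧ Represents τ c₂

/-!
Relabelling `[n]` by a permutation preserves both `⪯` and the type of a set composition, and two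
set compositions of the same type differ by a relabelling; this gives transitivity. For
antisymmetry, `α ≤' β ≤' α` yields `π⃗ ⪯ τ⃗ ⪯ ρ⃗` with `π⃗`, `ρ⃗` of type `α`.
The families `U(·)` of sets with a unique minimum then satisfy `U(π⃗) ⊆ U(τ⃗) ⊆ U(ρ⃗)` and
`|U(π⃗)| = |U(ρ⃗)|`, so `U(π⃗) = U(τ⃗)`. This family determines the partition (through pairs) and
the position of every block `B` with at least two elements: for `y ≠ y'` in `B`, the set
`{x, y, y'}` has a unique minimum iff `x` lies in an earlier block. The singleton blocks fill the
remaining positions, so `π⃗` and `τ⃗` have the same type.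
-/

open Finset

lemma card_image_eq_of_apply_eq_iff {α β γ : Type*} [DecidableEq β] [DecidableEq γ]
    {s : Finset α} {f : α → β} {f' : α → γ} (h : ∀ x ∈ s, ∀ y ∈ s, f x = f y ↔ f' x = f' y) :
    #(s.image f) = #(s.image f') := by
  set p : α → β × γ := fun x => (f x, f' x)
  have hfst : Set.InjOn Prod.fst (s.image p : Set (β × γ)) := by
    rintro _ hp _ hq (hpq : _ = _)
    obtain ⟨x, hx, rfl⟩ := mem_image.1 hp
    obtain ⟨y, hy, rfl⟩ := mem_image.1 hq
    exact Prod.ext hpq ((h x hx y hy).1 hpq)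
  have hsnd : Set.InjOn Prod.snd (s.image p : Set (β × γ)) := by
    rintro _ hp _ hq (hpq : _ = _)
    obtain ⟨x, hx, rfl⟩ := mem_image.1 hp
    obtain ⟨y, hy, rfl⟩ := mem_image.1 hq
    exact Prod.ext ((h x hx y hy).2 hpq) hpq
  have := (card_image_of_injOn hfst).trans (card_image_of_injOn hsnd).symm
  rw [image_image, image_image] at this
  exact this

section

variable {n : ℕ}

section UniqMin

variable {g : Fin n → Fin n} {A : Finset (Fin n)}

lemma UniqMin.nonempty (h : UniqMin g A) : A.Nonempty :=
  let ⟨j, ⟨hj, _⟩, _⟩ := h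
  ⟨j, hj⟩

lemma uniqMin_of_forall_lt {j : Fin n} (hj : j ∈ A) (hlt : ∀ k ∈ A, k ≠ j → g j < g k) :
    UniqMin g A := by
  refine ⟨j, ⟨hj, fun k hk => ?_⟩, fun k ⟨hk, hmin⟩ => ?_⟩
  · rcases eq_or_ne k j with rfl | hkj
    · exact le_rfl
    · exact (hlt k hk hkj).le
  · by_contra hkj
    exact (hmin j hj).not_gt (hlt k hk hkj)

lemma not_uniqMin_of_apply_eq {j j' : Fin n} (hjj' : j ≠ j') (hj : j ∈ A) (hj' : j' ∈ A)
    (heq : g j = g j') (hmin : ∀ k ∈ A, g j ≤ g k) : ¬ UniqMin g A := fun h =>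
  hjj' (h.unique ⟨hj, hmin⟩ ⟨hj', heq ▸ hmin⟩)

lemma uniqMin_pair_iff {x y : Fin n} (hxy : x ≠ y) : UniqMin g {x, y} ↔ g x ≠ g y := by
  refine ⟨fun h heq => not_uniqMin_of_apply_eq hxy (by simp) (by simp) heq ?_ h, fun hne => ?_⟩
  · simp [heq]
  · rcases hne.lt_or_gt with hlt | hlt
    · exact uniqMin_of_forall_lt (j := x) (by simp) (by simp [hlt])
    · exact uniqMin_of_forall_lt (j := y) (by simp) (by simp [hlt])

lemma uniqMin_comp (φ : Equiv.Perm (Fin n)) :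
    UniqMin (g ∘ φ) A ↔ UniqMin g (A.map φ.toEmbedding) := by
  refine φ.existsUnique_congr fun j =>
    and_congr (by simp) ⟨fun hmin k hk => ?_, fun hmin k hk => ?_⟩
  · obtain ⟨k, hkA, rfl⟩ := mem_map.1 hk
    exact hmin k hkA
  · exact hmin (φ k) (mem_map_of_mem _ hk)

end UniqMin

namespace IsPacked

variable {g : Fin n → Fin n}

lemma image_filter_lt (hg : IsPacked g) (y : Fin n) :
    ({x | g x < g y} : Finset (Fin n)).image g = Iio (g y) := by
  ext c
  simp only [mem_image, mem_filter, mem_univ, true_and, mem_Iio]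
  refine ⟨fun ⟨x, hx, hxc⟩ => hxc ▸ hx, fun hc => ?_⟩
  obtain ⟨x, rfl⟩ := hg (g y) ⟨y, rfl⟩ c hc.le
  exact ⟨x, hc, rfl⟩

lemma val_apply_eq_card (hg : IsPacked g) (y : Fin n) :
    (g y : ℕ) = #(({x | g x < g y} : Finset (Fin n)).image g) := by
  rw [hg.image_filter_lt, Fin.card_Iio]

lemma mem_image_iff (hg : IsPacked g) (c : Fin n) :
    c ∈ univ.image g ↔ (c : ℕ) < #(univ.image g) := by
  refine ⟨fun hc => ?_, fun hc => ?_⟩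
  · obtain ⟨y, -, rfl⟩ := mem_image.1 hc
    rw [hg.val_apply_eq_card y]
    refine card_lt_card (ssubset_of_subset_of_ne (image_subset_image (subset_univ _)) fun heq => ?_)
    obtain ⟨x, hx, hxy⟩ := mem_image.1 (heq ▸ mem_image_of_mem g (mem_univ y))
    exact (mem_filter.1 hx).2.ne hxy
  · by_contra hnc
    have hsub : univ.image g ⊆ Iio c := fun d hd => by
      obtain ⟨x, -, rfl⟩ := mem_image.1 hd
      exact mem_Iio.2 (lt_of_not_ge fun hcd => hnc (by
        obtain ⟨y, rfl⟩ := hg (g x) ⟨x, rfl⟩ c hcd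
        exact mem_image_of_mem g (mem_univ y)))
    exact (card_le_card hsub).not_gt (by rwa [Fin.card_Iio])

end IsPacked

section SameUniqMin

variable {g h : Fin n → Fin n}

lemma apply_eq_apply_iff_of_uniqMin_iff (H : ∀ A, UniqMin g A ↔ UniqMin h A) (x y : Fin n) :
    g x = g y ↔ h x = h y := by
  rcases eq_or_ne x y with rfl | hxy
  · simp
  · simpa [uniqMin_pair_iff hxy, not_iff_not] using H {x, y}

lemma lt_of_uniqMin_iff (H : ∀ A, UniqMin g A ↔ UniqMin h A) {x y y' : Fin n} (hyy' : y ≠ y')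
    (hgy : g y = g y') (hlt : g x < g y) : h x < h y := by
  have hA : UniqMin g {x, y, y'} :=
    uniqMin_of_forall_lt (j := x) (by simp) (by simp [← hgy, hlt])
  by_contra! hle
  have hhy : h y = h y' := (apply_eq_apply_iff_of_uniqMin_iff H y y').1 hgy
  exact not_uniqMin_of_apply_eq hyy' (by simp) (by simp) hhy (by simp [hle, ← hhy]) ((H _).1 hA)

lemma apply_eq_of_uniqMin_iff (hg : IsPacked g) (hh : IsPacked h)
    (H : ∀ A, UniqMin g A ↔ UniqMin h A) {y y' : Fin n} (hyy' : y ≠ y') (hgy : g y = g y') :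
    g y = h y := by
  have hker := apply_eq_apply_iff_of_uniqMin_iff H
  have hbelow : ({x | g x < g y} : Finset (Fin n)) = ({x | h x < h y} : Finset (Fin n)) := by
    ext x
    simp only [mem_filter, mem_univ, true_and]
    exact ⟨lt_of_uniqMin_iff H hyy' hgy,
      lt_of_uniqMin_iff (fun A => (H A).symm) hyy' ((hker y y').1 hgy)⟩
  refine Fin.ext ?_
  rw [hg.val_apply_eq_card, hh.val_apply_eq_card, hbelow]
  exact card_image_eq_of_apply_eq_iff fun x _ y _ => hker x y

lemma fiber_eq_of_uniqMin_iff (hg : IsPacked g) (hh : IsPacked h)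
    (H : ∀ A, UniqMin g A ↔ UniqMin h A) {j : Fin n} (hj : 1 < #{i | g i = j}) :
    ({i | g i = j} : Finset (Fin n)) = ({i | h i = j} : Finset (Fin n)) := by
  obtain ⟨y, hy, y', hy', hyy'⟩ := one_lt_card.1 hj
  simp only [mem_filter, mem_univ, true_and] at hy hy'
  have hhy : h y = j := (apply_eq_of_uniqMin_iff hg hh H hyy' (hy.trans hy'.symm)).symm.trans hy
  ext x
  simp only [mem_filter, mem_univ, true_and]
  simpa only [hy, hhy] using apply_eq_apply_iff_of_uniqMin_iff H x y

lemma card_fiber_eq_of_uniqMin_iff (hg : IsPacked g) (hh : IsPacked h)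
    (H : ∀ A, UniqMin g A ↔ UniqMin h A) (j : Fin n) : #{i | g i = j} = #{i | h i = j} := by
  by_cases hgj : 1 < #{i | g i = j}
  · rw [fiber_eq_of_uniqMin_iff hg hh H hgj]
  by_cases hhj : 1 < #{i | h i = j}
  · rw [fiber_eq_of_uniqMin_iff hh hg (fun A => (H A).symm) hhj]
  have hcolors : #(univ.image g) = #(univ.image h) :=
    card_image_eq_of_apply_eq_iff fun x _ y _ => apply_eq_apply_iff_of_uniqMin_iff H x y
  have hused : j ∈ univ.image g ↔ j ∈ univ.image h := by
    rw [hg.mem_image_iff, hh.mem_image_iff, hcolors]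
  have hpos : ∀ f : Fin n → Fin n, 0 < #{i | f i = j} ↔ j ∈ univ.image f := fun f => by
    simp [card_pos, Finset.Nonempty]
  have := (hpos g).trans (hused.trans (hpos h).symm)
  omega

end SameUniqMin

namespace Composition

variable (c : Composition n)

lemma getD_blocks_pos_iff (j : ℕ) : 0 < c.blocks.getD j 0 ↔ j < c.length := by
  refine ⟨fun h => lt_of_not_ge fun hj => ?_, fun hj => ?_⟩
  · rw [List.getD_eq_default _ _ hj] at h
    exact h.false
  · rw [List.getD_eq_getElem _ _ hj]
    exact c.blocks_pos (List.getElem_mem hj)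

lemma getD_blocks_eq_blocksFun (j : Fin c.length) : c.blocks.getD j 0 = c.blocksFun j :=
  List.getD_eq_getElem _ _ j.2

lemma card_filter_getD_blocks_pos : #{j : Fin n | 0 < c.blocks.getD j 0} = c.length := by
  simp only [getD_blocks_pos_iff, Fin.card_filter_val_lt]
  exact min_eq_right c.length_le

lemma ext_getD {c₁ c₂ : Composition n}
    (h : ∀ j : Fin n, c₁.blocks.getD j 0 = c₂.blocks.getD j 0) : c₁ = c₂ := by
  have hlen : c₁.length = c₂.length := by
    rw [← c₁.card_filter_getD_blocks_pos, ← c₂.card_filter_getD_blocks_pos]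
    simp only [h]
  refine Composition.ext (List.ext_getElem hlen fun j hj₁ hj₂ => ?_)
  have := h ⟨j, hj₁.trans_le c₁.length_le⟩
  rwa [List.getD_eq_getElem _ _ hj₁, List.getD_eq_getElem _ _ hj₂] at this

lemma card_filter_index_eq (j : Fin c.length) : #{x | c.index x = j} = c.blocksFun j := by
  rw [← Fintype.card_fin (c.blocksFun j), ← card_univ, ← card_map (c.embedding j).toEmbedding]
  congr 1
  ext x
  simp [eq_comm, ← c.mem_range_embedding_iff']

end Composition

lemma represents_iff {π : SetComp n} {c : Composition n} :
    Represents π c ↔ ∀ j : Fin n, #{i | π.1 i = j} = c.blocks.getD j 0 := by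
  have hcolors : ({b | ∃ i, π.1 i = b} : Finset (Fin n)) = univ.image π.1 := by
    ext; simp
  refine ⟨fun ⟨hlen, hblocks⟩ j => ?_, fun hf => ⟨?_, fun j => ?_⟩⟩
  · by_cases hj : (j : ℕ) < c.length
    · rw [c.getD_blocks_eq_blocksFun ⟨j, hj⟩, hblocks]
      simp [Fin.val_inj]
    · rw [List.getD_eq_default _ _ (not_lt.1 hj), card_eq_zero, filter_eq_empty_iff]
      rintro i - rfl
      rw [hcolors] at hlen
      exact hj (hlen ▸ (π.2.mem_image_iff _).1 (mem_image_of_mem _ (mem_univ i)))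
  · rw [← c.card_filter_getD_blocks_pos]
    congr 1
    ext b
    simp only [mem_filter, mem_univ, true_and]
    rw [← hf b, card_pos, filter_nonempty_iff]
    simp
  · rw [← c.getD_blocks_eq_blocksFun, ← hf ⟨j, j.2.trans_le c.length_le⟩]
    simp [Fin.ext_iff]

lemma exists_represents (c : Composition n) : ∃ π : SetComp n, Represents π c := by
  set g : Fin n → Fin n := fun i => Fin.castLE c.length_le (c.index i)
  have hused : ∀ b : Fin n, (∃ i, g i = b) ↔ (b : ℕ) < c.length := fun b =>
    ⟨fun ⟨i, hi⟩ => hi ▸ (c.index i).2, fun hb =>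
      ⟨c.embedding ⟨b, hb⟩ ⟨0, c.one_le_blocksFun _⟩, Fin.ext (by simp [g])⟩⟩
  refine ⟨⟨g, fun b hb d hd => (hused d).2 (Nat.lt_of_le_of_lt hd ((hused b).1 hb))⟩,
    represents_iff.2 fun j => ?_⟩
  by_cases hj : (j : ℕ) < c.length
  · rw [c.getD_blocks_eq_blocksFun ⟨j, hj⟩, ← c.card_filter_index_eq]
    congr 1
    ext x
    simp [g, Fin.ext_iff]
  · rw [List.getD_eq_default _ _ (not_lt.1 hj), card_eq_zero, filter_eq_empty_iff]
    exact fun i _ hi => hj ((hused j).1 ⟨i, hi⟩)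

def SetComp.comp (π : SetComp n) (φ : Equiv.Perm (Fin n)) : SetComp n :=
  ⟨π.1 ∘ φ, fun b ⟨i, hi⟩ d hd =>
    let ⟨x, hx⟩ := π.2 b ⟨φ i, hi⟩ d hd
    ⟨φ.symm x, by simpa using hx⟩⟩

lemma SCle.trans {π τ ρ : SetComp n} (hπτ : SCle π τ) (hτρ : SCle τ ρ) : SCle π ρ :=
  fun A hA h => hτρ A hA (hπτ A hA h)

lemma SCle.comp {π τ : SetComp n} (h : SCle π τ) (φ : Equiv.Perm (Fin n)) :
    SCle (π.comp φ) (τ.comp φ) := fun _ hA hU =>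
  (uniqMin_comp φ).2 (h _ hA.map ((uniqMin_comp φ).1 hU))

lemma SCle.setOf_uniqMin_subset {π τ : SetComp n} (h : SCle π τ) :
    {A | UniqMin π.1 A} ⊆ {A | UniqMin τ.1 A} :=
  fun A hA => h A hA.nonempty hA

lemma Represents.comp {π : SetComp n} {c : Composition n} (h : Represents π c)
    (φ : Equiv.Perm (Fin n)) : Represents (π.comp φ) c := by
  rw [represents_iff] at h ⊢
  intro j
  rw [← h j, ← Fintype.card_subtype, ← Fintype.card_subtype]
  exact Fintype.card_congr (φ.subtypeEquiv fun _ => Iff.rfl)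

lemma Represents.exists_comp_eq {π τ : SetComp n} {c : Composition n} (hπ : Represents π c)
    (hτ : Represents τ c) : ∃ φ : Equiv.Perm (Fin n), τ.comp φ = π := by
  rw [represents_iff] at hπ hτ
  have e : ∀ j, {x // π.1 x = j} ≃ {x // τ.1 x = j} := fun j =>
    Fintype.equivOfCardEq (by rw [Fintype.card_subtype, Fintype.card_subtype, hπ, hτ])
  exact ⟨Equiv.ofFiberEquiv e, Subtype.ext (funext (Equiv.ofFiberEquiv_map e))⟩

lemma ncard_setOf_uniqMin_comp (g : Fin n → Fin n) (φ : Equiv.Perm (Fin n)) :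
    {A | UniqMin (g ∘ φ) A}.ncard = {A | UniqMin g A}.ncard := by
  rw [← Nat.card_coe_set_eq, ← Nat.card_coe_set_eq]
  exact Nat.card_congr (φ.finsetCongr.subtypeEquiv fun _ => uniqMin_comp φ)

lemma le'.exists_scle {b c : Composition n} (h : le' b c) {τ : SetComp n}
    (hτ : Represents τ b) : ∃ ρ : SetComp n, SCle τ ρ ∧ Represents ρ c := by
  obtain ⟨σ, ρ, hσρ, hσ, hρ⟩ := h
  obtain ⟨φ, rfl⟩ := hτ.exists_comp_eq hσ
  exact ⟨ρ.comp φ, hσρ.comp φ, hρ.comp φ⟩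

lemma uniqMin_iff_of_scle_of_scle {π τ ρ : SetComp n} {c : Composition n} (hπτ : SCle π τ)
    (hτρ : SCle τ ρ) (hπ : Represents π c) (hρ : Represents ρ c) (A : Finset (Fin n)) :
    UniqMin π.1 A ↔ UniqMin τ.1 A := by
  obtain ⟨φ, rfl⟩ := hπ.exists_comp_eq hρ
  have hcard : {A | UniqMin τ.1 A}.ncard ≤ {A | UniqMin (ρ.comp φ).1 A}.ncard :=
    (Set.ncard_le_ncard hτρ.setOf_uniqMin_subset).trans (ncard_setOf_uniqMin_comp ρ.1 φ).ge
  exact Set.ext_iff.1 (Set.eq_of_subset_of_ncard_le hπτ.setOf_uniqMin_subset hcard) A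

end

/-- The relation `≤'` on integer compositions of `n` is a partial
order. -/
theorem stmt13 (n : ℕ) : IsPartialOrder (Composition n) le' := by
  refine
    { refl := fun c => ?_
      trans := fun _ _ _ hab hbc => ?_
      antisymm := fun _ _ hab hba => ?_ }
  · obtain ⟨π, hπ⟩ := exists_represents c
    exact ⟨π, π, fun _ _ h => h, hπ, hπ⟩
  · obtain ⟨π, τ, hπτ, hπ, hτ⟩ := hab
    obtain ⟨ρ, hτρ, hρ⟩ := hbc.exists_scle hτ
    exact ⟨π, ρ, hπτ.trans hτρ, hπ, hρ⟩
  · obtain ⟨π, τ, hπτ, hπ, hτ⟩ := hab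
    obtain ⟨ρ, hτρ, hρ⟩ := hba.exists_scle hτ
    have H := uniqMin_iff_of_scle_of_scle hπτ hτρ hπ hρ
    rw [represents_iff] at hπ hτ
    exact Composition.ext_getD fun j => by
      rw [← hπ, ← hτ, card_fiber_eq_of_uniqMin_iff π.2 τ.2 H]
end

section
/- Equivalence classes of set compositions of [n] under ∼ are in bijection with integral barred set compositions of [n]: set compositions where some blocks are barred, no two barred blocks occur consecutively, and every singleton block is barred. The bijection sends an equivalence class to the barred composition obtained by merging each maximal run of consecutive singleton blocks into one barred block. -/
/-!
Whether the minima of `A` form a singleton depends on a set composition `P` only through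
`mergeRuns P`: a run of singleton blocks answers "yes" for every `A` whose first block meets
the run. Conversely these answers recover an integral barred composition block by block. The
answer for the whole ground set says whether the first block is barred; a barred first block
consists of the points all of whose supersets answer "yes" (the next block is unbarred, so it
has at least two points); an unbarred first block has at least two points and is determined by
the answers on sets of two and three points. Replacing each barred block by a run of singleton
blocks gives a right inverse of `mergeRuns`.
-/

/-- A list of finsets is the list of blocks of a set composition of `[n]`: blocks are
nonempty, pairwise disjoint, and cover `[n]`. -/
def BlocksOK {n : ℕ} (L : List (Finset (Fin n))) : Prop :=
  (∀ B ∈ L, B.Nonempty) ∧ L.Pairwise (fun B C => Disjoint B C) ∧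
    ∀ i : Fin n, ∃ B ∈ L, i ∈ B

/-- Set compositions of `[n]`, as lists of blocks. -/
def SetCompL (n : ℕ) := {L : List (Finset (Fin n)) // BlocksOK L}

/-- `minBlock L A` is `A` intersected with the earliest block of `L` meeting `A`
(the set of minima `A_π⃗`). -/
def minBlock {n : ℕ} : List (Finset (Fin n)) → Finset (Fin n) → Finset (Fin n)
  | [], _ => ∅
  | B :: t, A => if (A ∩ B).Nonempty then A ∩ B else minBlock t A

/-- The SC equivalence relation `∼` on set compositions: for every nonempty `A ⊆ [n]`,
the minima of `A` in `P` form a singleton iff the minima of `A` in `Q` do. -/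
def SimL {n : ℕ} (P Q : SetCompL n) : Prop :=
  ∀ A : Finset (Fin n), A.Nonempty →
    ((minBlock P.1 A).card = 1 ↔ (minBlock Q.1 A).card = 1)

/-- An *integral barred set composition* (IBSC): a set composition whose blocks may be
barred (`true` = barred), such that no two consecutive blocks are barred and every
singleton block is barred. -/
def IsIBSC {n : ℕ} (L : List (Finset (Fin n) × Bool)) : Prop :=
  BlocksOK (L.map Prod.fst) ∧
    L.Chain' (fun p q => ¬(p.2 = true ∧ q.2 = true)) ∧
    ∀ p ∈ L, p.1.card = 1 → p.2 = true

/-- Integral barred set compositions of `[n]`. -/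
def IBSC (n : ℕ) := {L : List (Finset (Fin n) × Bool) // IsIBSC L}

/-- Merge each maximal run of consecutive singleton blocks into a single barred block;
non-singleton blocks are left unbarred. -/
def mergeRuns {n : ℕ} : List (Finset (Fin n)) → List (Finset (Fin n) × Bool)
  | [] => []
  | B :: t =>
    if B.card = 1 then
      match mergeRuns t with
      | (C, true) :: t' => (B ∪ C, true) :: t'
      | r => (B, true) :: r
    else (B, false) :: mergeRuns t

section Finset

variable {α : Type*} [DecidableEq α]

theorem card_inter_eq_one_of_card_eq_one {A B : Finset α} (hB : B.card = 1)
    (h : (A ∩ B).Nonempty) : (A ∩ B).card = 1 :=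
  le_antisymm (hB ▸ Finset.card_le_card Finset.inter_subset_right) (Finset.one_le_card.2 h)

theorem subset_of_card_inter_eq_one_iff {M M' : Finset α} (hM' : 1 < M'.card)
    (h : ∀ A ⊆ M ∪ M', (A ∩ M).Nonempty → (A ∩ M').Nonempty →
      ((A ∩ M).card = 1 ↔ (A ∩ M').card = 1)) :
    M ⊆ M' := by
  intro i hiM
  by_contra hiM'
  -- `{i, x, y}` meets `M'` in two points, so it meets `M` in a second point `z`;
  -- then `{i, z}` meets `M` in two points but `M'` in one.
  obtain ⟨x, hx, y, hy, hxy⟩ := Finset.one_lt_card.1 hM'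
  have hxyM' : {x, y} ⊆ M' := Finset.insert_subset hx (Finset.singleton_subset_iff.2 hy)
  have hixyM : ({i, x, y} ∩ M).card ≠ 1 := by
    rw [Ne, h _ (Finset.insert_subset (Finset.mem_union_left _ hiM)
        (hxyM'.trans Finset.subset_union_right)) ⟨i, by simp [hiM]⟩ ⟨x, by simp [hx]⟩,
      Finset.insert_inter_of_notMem hiM', Finset.inter_eq_left.2 hxyM', Finset.card_pair hxy]
    decide
  obtain ⟨z, hz, hzi⟩ := Finset.exists_mem_ne
    (lt_of_le_of_ne (Finset.one_le_card.2 ⟨i, by simp [hiM]⟩) (Ne.symm hixyM)) i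
  obtain ⟨hzixy, hzM⟩ := Finset.mem_inter.1 hz
  have hzM' : z ∈ M' := hxyM' ((Finset.mem_insert.1 hzixy).resolve_left hzi)
  have hizM : {i, z} ⊆ M := Finset.insert_subset hiM (Finset.singleton_subset_iff.2 hzM)
  have hiz := h {i, z} (hizM.trans Finset.subset_union_left) ⟨i, by simp [hiM]⟩
    ⟨z, by simp [hzM']⟩
  rw [Finset.inter_eq_left.2 hizM, Finset.card_pair (Ne.symm hzi),
    Finset.insert_inter_of_notMem hiM', Finset.singleton_inter_of_mem hzM'] at hiz
  simp at hiz

theorem eq_of_card_inter_eq_one_iff {M M' : Finset α} (hM : 1 < M.card) (hM' : 1 < M'.card)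
    (h : ∀ A ⊆ M ∪ M', (A ∩ M).Nonempty → (A ∩ M').Nonempty →
      ((A ∩ M).card = 1 ↔ (A ∩ M').card = 1)) :
    M = M' :=
  (subset_of_card_inter_eq_one_iff hM' h).antisymm <| subset_of_card_inter_eq_one_iff hM
    fun A hA h1 h2 => (h A (Finset.union_comm M M' ▸ hA) h2 h1).symm

end Finset

section Blocks

variable {α : Type*} [DecidableEq α]

def BlocksOn : Finset α → List (Finset α) → Prop
  | S, [] => S = ∅
  | S, B :: L => B.Nonempty ∧ B ⊆ S ∧ BlocksOn (S \ B) L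

theorem blocksOn_iff {S : Finset α} {L : List (Finset α)} :
    BlocksOn S L ↔ (∀ B ∈ L, B.Nonempty) ∧ L.Pairwise Disjoint ∧
      ∀ i, i ∈ S ↔ ∃ B ∈ L, i ∈ B := by
  induction L generalizing S with
  | nil => simp [BlocksOn, Finset.eq_empty_iff_forall_notMem]
  | cons B L ih =>
    simp only [BlocksOn, ih, List.forall_mem_cons, List.pairwise_cons,
      List.exists_mem_cons_iff, Finset.mem_sdiff]
    constructor
    · rintro ⟨hB, hBS, hne, hpw, hcov⟩
      refine ⟨⟨hB, hne⟩, ⟨fun C hC => Finset.disjoint_left.2 fun i hiB hiC => ?_, hpw⟩,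
        fun i => ⟨fun hi => ?_, ?_⟩⟩
      · exact ((hcov i).2 ⟨C, hC, hiC⟩).2 hiB
      · by_cases hiB : i ∈ B
        · exact Or.inl hiB
        · exact Or.inr ((hcov i).1 ⟨hi, hiB⟩)
      · rintro (hiB | hiL)
        · exact hBS hiB
        · exact ((hcov i).2 hiL).1
    · rintro ⟨⟨hB, hne⟩, ⟨hdisj, hpw⟩, hcov⟩
      refine ⟨hB, fun i hi => (hcov i).2 (Or.inl hi), hne, hpw, fun i => ⟨?_, ?_⟩⟩
      · rintro ⟨hiS, hiB⟩
        exact ((hcov i).1 hiS).resolve_left hiB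
      · rintro ⟨C, hC, hiC⟩
        exact ⟨(hcov i).2 (Or.inr ⟨C, hC, hiC⟩),
          fun hiB => Finset.disjoint_left.1 (hdisj C hC) hiB hiC⟩

theorem BlocksOn.eq_nil_iff {S : Finset α} {L : List (Finset α)} (h : BlocksOn S L) :
    L = [] ↔ S = ∅ := by
  cases L with
  | nil => exact iff_of_true rfl h
  | cons B L =>
    exact iff_of_false (List.cons_ne_nil _ _) fun hS =>
      h.1.ne_empty (Finset.subset_empty.1 (hS ▸ h.2.1))

theorem blocksOn_map_singleton_append {S : Finset α} {l : List α} {L : List (Finset α)}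
    (hl : l.Nodup) (hlS : l.toFinset ⊆ S) (hL : BlocksOn (S \ l.toFinset) L) :
    BlocksOn S (l.map ({·}) ++ L) := by
  induction l generalizing S with
  | nil => simpa using hL
  | cons x l ih =>
    rw [List.nodup_cons] at hl
    rw [List.toFinset_cons, Finset.insert_subset_iff] at hlS
    refine ⟨Finset.singleton_nonempty x, Finset.singleton_subset_iff.2 hlS.1, ih hl.2 ?_ ?_⟩
    · exact fun y hy => Finset.mem_sdiff.2 ⟨hlS.2 hy,
        Finset.notMem_singleton.2 (ne_of_mem_of_not_mem (List.mem_toFinset.1 hy) hl.1)⟩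
    · simp only [sdiff_sdiff_left, List.toFinset_cons, Finset.insert_eq, Finset.sup_eq_union]
        at hL ⊢
      exact hL

noncomputable def expand : List (Finset α × Bool) → List (Finset α)
  | [] => []
  | (M, true) :: K => M.toList.map ({·}) ++ expand K
  | (M, false) :: K => M :: expand K

theorem blocksOn_expand {S : Finset α} {K : List (Finset α × Bool)}
    (h : BlocksOn S (K.map Prod.fst)) : BlocksOn S (expand K) := by
  induction K generalizing S with
  | nil => exact h
  | cons p K ih =>
    obtain ⟨M, _ | _⟩ := p
    · exact ⟨h.1, h.2.1, ih h.2.2⟩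
    · exact blocksOn_map_singleton_append M.nodup_toList (by simpa using h.2.1)
        (by simpa using ih h.2.2)

end Blocks

section Barred

variable {α : Type*} [DecidableEq α]

/-- A barred block stands for a run of singleton blocks, so if it is the first block meeting
`A`, the minima of `A` form a singleton. -/
def SingletonMinima : List (Finset α × Bool) → Finset α → Prop
  | [], _ => False
  | (M, b) :: K, A =>
    if (A ∩ M).Nonempty then b = true ∨ (A ∩ M).card = 1 else SingletonMinima K A

theorem singletonMinima_cons_of_inter_eq_empty {M A : Finset α} {b : Bool}
    {K : List (Finset α × Bool)} (h : A ∩ M = ∅) :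
    SingletonMinima ((M, b) :: K) A ↔ SingletonMinima K A := by
  simp [SingletonMinima, h]

def IsIBSCOn (S : Finset α) (K : List (Finset α × Bool)) : Prop :=
  BlocksOn S (K.map Prod.fst) ∧ K.IsChain (fun p q => ¬(p.2 = true ∧ q.2 = true)) ∧
    ∀ p ∈ K, p.1.card = 1 → p.2 = true

namespace IsIBSCOn

variable {S M : Finset α} {b : Bool} {K : List (Finset α × Bool)}

theorem tail (h : IsIBSCOn S ((M, b) :: K)) : IsIBSCOn (S \ M) K :=
  ⟨h.1.2.2, h.2.1.tail, fun p hp => h.2.2 p (List.mem_cons_of_mem _ hp)⟩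

theorem one_lt_card_of_unbarred (h : IsIBSCOn S ((M, false) :: K)) : 1 < M.card :=
  lt_of_le_of_ne (Finset.one_le_card.2 h.1.1) fun h1 => by
    simpa using h.2.2 _ List.mem_cons_self h1.symm

theorem singletonMinima_iff_barred (h : IsIBSCOn S ((M, b) :: K)) :
    SingletonMinima ((M, b) :: K) S ↔ b = true := by
  have hMS : S ∩ M = M := Finset.inter_eq_right.2 h.1.2.1
  simp only [SingletonMinima, hMS, h.1.1, if_true, or_iff_left_iff_imp]
  exact h.2.2 _ List.mem_cons_self

theorem mem_iff_of_barred (h : IsIBSCOn S ((M, true) :: K)) {i : α} (hi : i ∈ S) :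
    i ∈ M ↔ ∀ A ⊆ S, i ∈ A → SingletonMinima ((M, true) :: K) A := by
  refine ⟨fun hiM A _ hiA => ?_, fun hA => by_contra fun hiM => ?_⟩
  · simp [SingletonMinima, show (A ∩ M).Nonempty from ⟨i, Finset.mem_inter.2 ⟨hiA, hiM⟩⟩]
  have hK := h.tail
  obtain ⟨⟨D, d⟩, K, rfl⟩ : ∃ p K', K = p :: K' := by
    cases K with
    | nil =>
      exact absurd (hK.1.eq_nil_iff.1 rfl) (Finset.ne_empty_of_mem (a := i) (by simp [hi, hiM]))
    | cons p K => exact ⟨p, K, rfl⟩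
  have hd : d = false := by simpa using List.isChain_cons_cons.1 h.2.1 |>.1
  have hD1 : D.card ≠ 1 := fun h1 => by simpa [hd] using hK.2.2 _ List.mem_cons_self h1
  obtain ⟨hDne, hDS, -⟩ : D.Nonempty ∧ D ⊆ S \ M ∧ _ := hK.1
  have hAM : insert i D ∩ M = ∅ := by
    refine Finset.eq_empty_of_forall_notMem fun x hx => ?_
    obtain ⟨hxA, hxM⟩ := Finset.mem_inter.1 hx
    rcases Finset.mem_insert.1 hxA with rfl | hxD
    · exact hiM hxM
    · exact (Finset.mem_sdiff.1 (hDS hxD)).2 hxM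
  have hAD : insert i D ∩ D = D := Finset.inter_eq_right.2 (Finset.subset_insert i D)
  have := hA (insert i D) (Finset.insert_subset hi fun x hx => (Finset.mem_sdiff.1 (hDS hx)).1)
    (Finset.mem_insert_self i D)
  rw [singletonMinima_cons_of_inter_eq_empty hAM] at this
  simp [SingletonMinima, hAD, hDne, hd, hD1] at this

theorem eq_of_singletonMinima_iff {K' : List (Finset α × Bool)} (hK : IsIBSCOn S K)
    (hK' : IsIBSCOn S K')
    (h : ∀ A ⊆ S, A.Nonempty → (SingletonMinima K A ↔ SingletonMinima K' A)) : K = K' := by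
  induction K generalizing S K' with
  | nil =>
    obtain rfl := hK.1.eq_nil_iff.1 rfl
    exact (List.map_eq_nil_iff.1 (hK'.1.eq_nil_iff.2 rfl)).symm
  | cons p K ih =>
    obtain ⟨M, b⟩ := p
    have hSne : S.Nonempty := hK.1.1.mono hK.1.2.1
    obtain ⟨⟨M', b'⟩, K', rfl⟩ : ∃ p K'', K' = p :: K'' := by
      cases K' with
      | nil => exact absurd (hK'.1.eq_nil_iff.1 rfl) hSne.ne_empty
      | cons p K'' => exact ⟨p, K'', rfl⟩
    obtain rfl : b = b' := Bool.eq_iff_iff.2 <| by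
      rw [← hK.singletonMinima_iff_barred, ← hK'.singletonMinima_iff_barred]
      exact h S subset_rfl hSne
    obtain rfl : M = M' := by
      cases b
      · refine eq_of_card_inter_eq_one_iff hK.one_lt_card_of_unbarred
          hK'.one_lt_card_of_unbarred fun A hA hAM hAM' => ?_
        have := h A (hA.trans (Finset.union_subset hK.1.2.1 hK'.1.2.1))
          (hAM.mono Finset.inter_subset_left)
        simpa [SingletonMinima, hAM, hAM'] using this
      · ext i
        by_cases hi : i ∈ S
        · rw [hK.mem_iff_of_barred hi, hK'.mem_iff_of_barred hi]
          exact forall₂_congr fun A hA => imp_congr_right fun hiA => h A hA ⟨i, hiA⟩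
        · exact iff_of_false (fun hiM => hi (hK.1.2.1 hiM)) fun hiM => hi (hK'.1.2.1 hiM)
    congr 1
    refine ih hK.tail hK'.tail fun A hA hAne => ?_
    have hAM : A ∩ M = ∅ := Finset.disjoint_iff_inter_eq_empty.1
      (Finset.disjoint_of_subset_left hA Finset.sdiff_disjoint)
    simpa only [singletonMinima_cons_of_inter_eq_empty hAM] using
      h A (hA.trans Finset.sdiff_subset) hAne

end IsIBSCOn

end Barred

section MergeRuns

variable {n : ℕ}

theorem blocksOn_mergeRuns {S : Finset (Fin n)} {L : List (Finset (Fin n))} (h : BlocksOn S L) :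
    BlocksOn S ((mergeRuns L).map Prod.fst) := by
  fun_induction mergeRuns L generalizing S with
  | case1 => exact h
  | case2 B t _ C r ht ih =>
    obtain ⟨-, hCS, hr⟩ :
        C.Nonempty ∧ C ⊆ S \ B ∧ BlocksOn ((S \ B) \ C) (r.map Prod.fst) := by
      simpa [ht, BlocksOn] using ih h.2.2
    exact ⟨h.1.mono Finset.subset_union_left,
      Finset.union_subset h.2.1 (hCS.trans Finset.sdiff_subset), by rwa [sdiff_sdiff_left] at hr⟩
  | case3 _ _ _ _ ih | case4 _ _ _ ih => exact ⟨h.1, h.2.1, ih h.2.2⟩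

theorem isChain_mergeRuns (L : List (Finset (Fin n))) :
    (mergeRuns L).IsChain (fun p q => ¬(p.2 = true ∧ q.2 = true)) := by
  fun_induction mergeRuns L with
  | case1 => exact .nil
  | case2 _ _ _ _ _ ht ih => rw [ht] at ih; exact List.isChain_cons.2 (List.isChain_cons.1 ih)
  | case3 _ t _ ht ih =>
    refine List.isChain_cons.2 ⟨?_, ih⟩
    rcases hm : mergeRuns t with _ | ⟨⟨C, _ | _⟩, r⟩
    · simp
    · simp
    · exact (ht C r hm).elim
  | case4 _ _ _ ih => exact List.isChain_cons.2 ⟨by simp, ih⟩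

theorem barred_of_mem_mergeRuns {L : List (Finset (Fin n))} {p : Finset (Fin n) × Bool}
    (hp : p ∈ mergeRuns L) (h1 : p.1.card = 1) : p.2 = true := by
  fun_induction mergeRuns L with
  | case1 => simp at hp
  | case2 _ _ _ _ _ ht ih =>
    rcases List.mem_cons.1 hp with rfl | hp
    · rfl
    · exact ih (ht ▸ List.mem_cons_of_mem _ hp)
  | case3 _ _ _ _ ih =>
    rcases List.mem_cons.1 hp with rfl | hp
    · rfl
    · exact ih hp
  | case4 _ _ hB ih =>
    rcases List.mem_cons.1 hp with rfl | hp
    · exact absurd h1 hB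
    · exact ih hp

theorem isIBSCOn_mergeRuns {S : Finset (Fin n)} {L : List (Finset (Fin n))} (h : BlocksOn S L) :
    IsIBSCOn S (mergeRuns L) :=
  ⟨blocksOn_mergeRuns h, isChain_mergeRuns L, fun _ hp => barred_of_mem_mergeRuns hp⟩

theorem card_minBlock_eq_one_iff (L : List (Finset (Fin n))) (A : Finset (Fin n)) :
    (minBlock L A).card = 1 ↔ SingletonMinima (mergeRuns L) A := by
  fun_induction mergeRuns L with
  | case1 => simp [minBlock, SingletonMinima]
  | case2 B _ hB C _ ht ih =>
    rw [ht] at ih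
    by_cases hAB : (A ∩ B).Nonempty
    · simp [minBlock, SingletonMinima, hAB, card_inter_eq_one_of_card_eq_one hB hAB,
        Finset.inter_union_distrib_left, hAB.mono Finset.subset_union_left]
    · rw [Finset.not_nonempty_iff_eq_empty] at hAB
      simpa [minBlock, SingletonMinima, hAB, Finset.inter_union_distrib_left] using ih
  | case3 B _ hB _ ih =>
    by_cases hAB : (A ∩ B).Nonempty
    · simp [minBlock, SingletonMinima, hAB, card_inter_eq_one_of_card_eq_one hB hAB]
    · simpa [minBlock, SingletonMinima, hAB] using ih
  | case4 B _ _ ih =>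
    by_cases hAB : (A ∩ B).Nonempty
    · simp [minBlock, SingletonMinima, hAB]
    · simpa [minBlock, SingletonMinima, hAB] using ih

theorem mergeRuns_map_singleton_append {l : List (Fin n)} {t : List (Finset (Fin n))}
    (hl : l ≠ []) (ht : ∀ C r, mergeRuns t ≠ (C, true) :: r) :
    mergeRuns (l.map ({·}) ++ t) = (l.toFinset, true) :: mergeRuns t := by
  induction l with
  | nil => exact absurd rfl hl
  | cons x l ih =>
    rcases eq_or_ne l [] with rfl | hl'
    · rcases hm : mergeRuns t with _ | ⟨⟨C, _ | _⟩, r⟩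
      · simp [mergeRuns, hm]
      · simp [mergeRuns, hm]
      · exact absurd hm (ht C r)
    · simp [mergeRuns, ih hl']

theorem mergeRuns_expand {S : Finset (Fin n)} {K : List (Finset (Fin n) × Bool)}
    (hK : IsIBSCOn S K) : mergeRuns (expand K) = K := by
  induction K generalizing S with
  | nil => rfl
  | cons p K ih =>
    obtain ⟨M, _ | _⟩ := p
    · have hM : M.card ≠ 1 := hK.one_lt_card_of_unbarred.ne'
      simp [expand, mergeRuns, hM, ih hK.tail]
    · have hhead : ∀ C r, mergeRuns (expand K) ≠ (C, true) :: r := by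
        rw [ih hK.tail]
        rintro C r rfl
        exact (List.isChain_cons_cons.1 hK.2.1).1 ⟨rfl, rfl⟩
      rw [expand, mergeRuns_map_singleton_append (by simpa using hK.1.1.ne_empty) hhead,
        ih hK.tail, Finset.toList_toFinset]

theorem blocksOK_iff_blocksOn_univ {L : List (Finset (Fin n))} :
    BlocksOK L ↔ BlocksOn Finset.univ L := by
  simp [blocksOn_iff, BlocksOK]

theorem isIBSC_iff_isIBSCOn_univ {K : List (Finset (Fin n) × Bool)} :
    IsIBSC K ↔ IsIBSCOn Finset.univ K :=
  and_congr_left' blocksOK_iff_blocksOn_univ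

theorem isIBSC_mergeRuns {L : List (Finset (Fin n))} (h : BlocksOK L) : IsIBSC (mergeRuns L) :=
  isIBSC_iff_isIBSCOn_univ.2 (isIBSCOn_mergeRuns (blocksOK_iff_blocksOn_univ.1 h))

theorem blocksOK_expand {K : List (Finset (Fin n) × Bool)} (h : IsIBSC K) :
    BlocksOK (expand K) :=
  blocksOK_iff_blocksOn_univ.2 (blocksOn_expand (isIBSC_iff_isIBSCOn_univ.1 h).1)

theorem mergeRuns_eq_iff_simL {P Q : SetCompL n} :
    mergeRuns P.1 = mergeRuns Q.1 ↔ SimL P Q := by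
  refine ⟨fun h A _ => by rw [card_minBlock_eq_one_iff, card_minBlock_eq_one_iff, h],
    fun h => ?_⟩
  refine (isIBSCOn_mergeRuns (blocksOK_iff_blocksOn_univ.1 P.2)).eq_of_singletonMinima_iff
    (isIBSCOn_mergeRuns (blocksOK_iff_blocksOn_univ.1 Q.2)) fun A _ hA => ?_
  simpa only [card_minBlock_eq_one_iff] using h A hA

end MergeRuns

/-- The equivalence classes of set compositions of `[n]` under `∼` are in
bijection with integral barred set compositions of `[n]`, via the map merging each maximal
run of consecutive singleton blocks into one barred block. -/
theorem stmt15 (n : ℕ) :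
    ∃ e : Quot (fun P Q : SetCompL n => SimL P Q) ≃ IBSC n,
      ∀ P : SetCompL n, (e (Quot.mk _ P)).1 = mergeRuns P.1 := by
  let f : SetCompL n → IBSC n := fun P => ⟨mergeRuns P.1, isIBSC_mergeRuns P.2⟩
  have hf : ∀ P Q, SimL P Q → f P = f Q := fun P Q h => Subtype.ext (mergeRuns_eq_iff_simL.2 h)
  refine ⟨Equiv.ofBijective (Quot.lift f hf) ⟨?_, ?_⟩, fun P => rfl⟩
  · rintro ⟨P⟩ ⟨Q⟩ h
    exact Quot.sound (mergeRuns_eq_iff_simL.1 (congrArg Subtype.val h))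
  · rintro ⟨K, hK⟩
    exact ⟨Quot.mk _ ⟨expand K, blocksOK_expand hK⟩,
      Subtype.ext (mergeRuns_expand (isIBSC_iff_isIBSCOn_univ.1 hK))⟩
end

section
/- The function l(x) = e^{2x} − (1+x)e^x − 1 has a unique positive real zero γ, this zero is simple, and every other complex zero z of l satisfies |z| > γ. -/
/-!
Write `l(z) + 1 = ∑ aₙ zⁿ` with `aₙ = (2ⁿ - n - 1)/n! ≥ 0`. On the reals, `l'(x) = eˣ(2eˣ - 2 - x)`
is positive for `x > 0`, so `l` is strictly increasing on `[0, ∞)`: it has exactly one positive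
zero `γ`, and that zero is simple. If `l(z) = 0`, then `1 = |∑ aₙ zⁿ| ≤ ∑ aₙ |z|ⁿ = l(|z|) + 1`,
so `|z| ≥ γ`. When `|z| = γ` this triangle inequality is an equality, which forces every `aₙ zⁿ`
to be a nonnegative real; since `a₂, a₃ > 0`, `z²` and `z³` are nonnegative reals, hence
`z = |z| = γ`.
-/

/-- The entire function `l(z) = e^{2z} − (1+z)e^z − 1`. -/
noncomputable def lfun (z : ℂ) : ℂ :=
  Complex.exp (2 * z) - (1 + z) * Complex.exp z - 1

noncomputable def lfunCoeff (n : ℕ) : ℝ := (2 ^ n - n - 1) / n.factorial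

lemma lfunCoeff_nonneg (n : ℕ) : 0 ≤ lfunCoeff n := by
  have : (n : ℝ) + 1 ≤ 2 ^ n := by exact_mod_cast Nat.lt_two_pow_self (n := n)
  unfold lfunCoeff
  exact div_nonneg (by linarith) (Nat.cast_nonneg _)

lemma Complex.hasSum_natCast_mul_pow_div_factorial (z : ℂ) :
    HasSum (fun n : ℕ => n * z ^ n / n.factorial) (z * Complex.exp z) := by
  refine (hasSum_nat_add_iff' 1).mp ?_
  have hshift : (fun n : ℕ => ((n + 1 : ℕ) : ℂ) * z ^ (n + 1) / (n + 1).factorial) =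
      fun n => z * (z ^ n / n.factorial) := by
    funext n
    rw [Nat.factorial_succ]
    push_cast
    field_simp
    ring
  simp only [Finset.sum_range_one, Nat.cast_zero, zero_mul, zero_div, sub_zero]
  rw [hshift, Complex.exp_eq_exp_ℂ]
  exact (NormedSpace.expSeries_div_hasSum_exp z).mul_left z

lemma hasSum_lfun_add_one (z : ℂ) :
    HasSum (fun n : ℕ => (lfunCoeff n : ℂ) * z ^ n) (lfun z + 1) := by
  have h2 := NormedSpace.expSeries_div_hasSum_exp (2 * z)
  have h1 := NormedSpace.expSeries_div_hasSum_exp z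
  rw [← Complex.exp_eq_exp_ℂ] at h1 h2
  have hcoeff : (fun n : ℕ => (lfunCoeff n : ℂ) * z ^ n) =
      fun n : ℕ => (2 * z) ^ n / n.factorial - z ^ n / n.factorial - n * z ^ n / n.factorial := by
    funext n
    simp only [lfunCoeff, mul_pow]
    push_cast
    ring
  rw [hcoeff, show lfun z + 1 = Complex.exp (2 * z) - Complex.exp z - z * Complex.exp z by
    unfold lfun; ring]
  exact (h2.sub h1).sub (Complex.hasSum_natCast_mul_pow_div_factorial z)

noncomputable def lfunReal (x : ℝ) : ℝ := Real.exp (2 * x) - (1 + x) * Real.exp x - 1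

@[simp, norm_cast]
lemma ofReal_lfunReal (x : ℝ) : (lfunReal x : ℂ) = lfun x := by
  simp [lfunReal, lfun]

lemma hasDerivAt_lfunReal (x : ℝ) :
    HasDerivAt lfunReal (2 * Real.exp (2 * x) - (2 + x) * Real.exp x) x := by
  have h := (((hasDerivAt_id x).const_mul 2).exp.sub
    (((hasDerivAt_id x).const_add 1).mul (Real.hasDerivAt_exp x))).sub_const 1
  exact h.congr_deriv (by simp only [id, mul_one, one_mul]; ring)

lemma deriv_lfunReal_pos {x : ℝ} (hx : 0 < x) : 0 < deriv lfunReal x := by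
  rw [(hasDerivAt_lfunReal x).deriv]
  have h1 : 1 + x ≤ Real.exp x := by linarith [Real.add_one_le_exp x]
  have h2 : Real.exp (2 * x) = Real.exp x * Real.exp x := by rw [← Real.exp_add]; ring_nf
  have h3 := Real.exp_pos x
  calc 0 < Real.exp x * x := by positivity
    _ ≤ Real.exp x * (2 * Real.exp x - 2 - x) := by gcongr; linarith
    _ = _ := by rw [h2]; ring

lemma continuous_lfunReal : Continuous lfunReal := by
  unfold lfunReal; fun_prop

lemma strictMonoOn_lfunReal : StrictMonoOn lfunReal (Set.Ici 0) :=
  strictMonoOn_of_deriv_pos (convex_Ici 0) continuous_lfunReal.continuousOn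
    fun _ hx ↦ deriv_lfunReal_pos (by rwa [interior_Ici] at hx)

lemma exists_pos_lfunReal_eq_zero : ∃ γ : ℝ, 0 < γ ∧ lfunReal γ = 0 := by
  have h0 : lfunReal 0 = -1 := by norm_num [lfunReal]
  have h2 : 0 < lfunReal 2 := by
    have he : 2 ≤ Real.exp 1 := by linarith [Real.add_one_le_exp 1]
    have he2 : 4 ≤ Real.exp 1 * Real.exp 1 := by nlinarith
    have h4 : Real.exp (2 * 2) = Real.exp 2 * Real.exp 2 := by rw [← Real.exp_add]; norm_num
    have h22 : Real.exp 2 = Real.exp 1 * Real.exp 1 := by rw [← Real.exp_add]; norm_num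
    unfold lfunReal
    rw [h4, h22]
    nlinarith
  obtain ⟨γ, ⟨hγ0, -⟩, hγ⟩ := intermediate_value_Ioo (by norm_num : (0 : ℝ) ≤ 2)
    continuous_lfunReal.continuousOn (show (0 : ℝ) ∈ Set.Ioo (lfunReal 0) (lfunReal 2) by
      rw [h0]; exact ⟨by norm_num, h2⟩)
  exact ⟨γ, hγ0, hγ⟩

lemma re_deriv_lfun_ofReal (x : ℝ) : (deriv lfun x).re = deriv lfunReal x := by
  have hdiff : DifferentiableAt ℂ lfun x := by unfold lfun; fun_prop
  have h := hdiff.hasDerivAt.real_of_complex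
  simp only [← ofReal_lfunReal, Complex.ofReal_re] at h
  exact h.deriv.symm

lemma hasSum_lfunCoeff_mul_pow (x : ℝ) :
    HasSum (fun n : ℕ => lfunCoeff n * x ^ n) (lfunReal x + 1) := by
  exact_mod_cast Complex.hasSum_ofReal.mp (by exact_mod_cast hasSum_lfun_add_one x)

open scoped ComplexOrder

lemma Complex.nonneg_of_hasSum_of_hasSum_norm {ι : Type*} {w : ι → ℂ} {s : ℝ}
    (hw : HasSum w s) (hnorm : HasSum (fun i ↦ ‖w i‖) s) (i : ι) : 0 ≤ w i := by
  have hdefect : HasSum (fun i ↦ ‖w i‖ - (w i).re) 0 := by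
    simpa using hnorm.sub (Complex.hasSum_re hw)
  have h := congr_fun ((hasSum_zero_iff_of_nonneg fun i ↦ sub_nonneg.2 (w i).re_le_norm).1
    hdefect) i
  rw [Pi.zero_apply, sub_eq_zero] at h
  exact Complex.re_eq_norm.1 h.symm

lemma Complex.eq_norm_of_sq_nonneg_of_cube_nonneg {z : ℂ} (h2 : 0 ≤ z ^ 2) (h3 : 0 ≤ z ^ 3) :
    z = ‖z‖ := by
  obtain ⟨x, rfl⟩ : ∃ x : ℝ, z = x := ⟨z.re, Complex.ext rfl (Complex.sq_nonneg_iff.1 h2)⟩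
  rw [← Complex.ofReal_pow, Complex.zero_le_real] at h3
  rw [Complex.norm_real, Real.norm_of_nonneg ((Odd.pow_nonneg_iff (by decide)).1 h3)]

lemma lfunReal_norm_nonneg_of_lfun_eq_zero {z : ℂ} (hz : lfun z = 0) : 0 ≤ lfunReal ‖z‖ := by
  have h := (hasSum_lfun_add_one z).norm_le_of_bounded (hasSum_lfunCoeff_mul_pow ‖z‖) fun n ↦ by
    rw [norm_mul, norm_pow, Complex.norm_real, Real.norm_of_nonneg (lfunCoeff_nonneg n)]
  rw [hz, zero_add, norm_one] at h
  linarith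

lemma eq_norm_of_lfun_eq_zero {z : ℂ} (hz : lfun z = 0) (hnorm : lfunReal ‖z‖ = 0) :
    z = ‖z‖ := by
  have hw : HasSum (fun n ↦ (lfunCoeff n : ℂ) * z ^ n) ((1 : ℝ) : ℂ) := by
    simpa [hz] using hasSum_lfun_add_one z
  have hw' : HasSum (fun n ↦ ‖(lfunCoeff n : ℂ) * z ^ n‖) 1 := by
    simpa [Real.norm_of_nonneg (lfunCoeff_nonneg _), hnorm] using hasSum_lfunCoeff_mul_pow ‖z‖
  have hpow {n : ℕ} (hn : 0 < lfunCoeff n) : 0 ≤ z ^ n := by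
    have h := mul_nonneg (Complex.zero_le_real.2 (inv_nonneg.2 hn.le))
      (Complex.nonneg_of_hasSum_of_hasSum_norm hw hw' n)
    rwa [← mul_assoc, ← Complex.ofReal_mul, inv_mul_cancel₀ hn.ne', Complex.ofReal_one,
      one_mul] at h
  exact Complex.eq_norm_of_sq_nonneg_of_cube_nonneg
    (hpow (by norm_num [lfunCoeff, Nat.factorial])) (hpow (by norm_num [lfunCoeff, Nat.factorial]))

/-- `l` has a unique positive real zero `γ`, this zero is simple
(`l'(γ) ≠ 0`), and every other complex zero `z` of `l` satisfies `|z| > γ`. -/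
theorem stmt16 :
    ∃ γ : ℝ, 0 < γ ∧ lfun γ = 0 ∧
      (∀ γ' : ℝ, 0 < γ' → lfun γ' = 0 → γ' = γ) ∧
      deriv lfun γ ≠ 0 ∧
      ∀ z : ℂ, lfun z = 0 → z ≠ γ → γ < ‖z‖ := by
  obtain ⟨γ, hγ, hγ0⟩ := exists_pos_lfunReal_eq_zero
  have hmem : γ ∈ Set.Ici (0 : ℝ) := hγ.le
  refine ⟨γ, hγ, by rw [← ofReal_lfunReal, hγ0, Complex.ofReal_zero], ?_, ?_, ?_⟩
  · intro γ' hγ' hzero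
    refine strictMonoOn_lfunReal.injOn hγ'.le hmem ?_
    rw [hγ0]
    exact_mod_cast (ofReal_lfunReal γ').trans hzero
  · intro h
    have := re_deriv_lfun_ofReal γ
    rw [h, Complex.zero_re] at this
    exact (deriv_lfunReal_pos hγ).ne this
  · intro z hz hne
    have hle : γ ≤ ‖z‖ := (strictMonoOn_lfunReal.le_iff_le hmem (norm_nonneg z)).1 <|
      hγ0 ▸ lfunReal_norm_nonneg_of_lfun_eq_zero hz
    refine lt_of_le_of_ne hle fun h ↦ hne ?_
    rw [eq_norm_of_lfun_eq_zero hz (h ▸ hγ0), ← h]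
end
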